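/- arXiv:1709.09617 — 7 statements merged into one kernel-verified Lean document; each statement's English description precedes it below -/
import Mathlib

section
/- Let λ > 1 be a real number and n ≥ 1 an integer. Then n has at least one λ-middle divisor (i.e. middle_λ(n) > 0) if and only if the number of λ-blocks of n, blocks_λ(n), is odd. -/
open scoped Classical symmDiff

/-- The set `D_n` of positive divisors of `n`, viewed inside `ℝ`. -/
noncomputable def divisorsR (n : ℕ) : Finset ℝ :=
  n.divisors.image (fun d => (d : ℝ))

/-- The set `λ·D_n = {λd : d ∣ n}`, viewed inside `ℝ`. -/
noncomputable def lamDivisorsR (l : ℝ) (n : ℕ) : Finset ℝ :=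
  n.divisors.image (fun d => l * (d : ℝ))

/-- The word `⟨⟨n⟩⟩_λ` over the alphabet `{a, b}`, encoded with `true = a` and
`false = b`: list the elements of the symmetric difference `D_n ∆ λD_n` in
increasing order, writing `a` for elements of `D_n \ λD_n` and `b` for
elements of `λD_n \ D_n`. -/
noncomputable def krWord (l : ℝ) (n : ℕ) : List Bool :=
  ((divisorsR n ∆ lamDivisorsR l n).sort (· ≤ ·)).map (fun x => decide (x ∈ divisorsR n))

/-- A Dyck word (`true = a`, `false = b`): every prefix has at least as many
`a`'s as `b`'s, and the whole word has equally many `a`'s and `b`'s. -/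
def IsDyck (w : List Bool) : Prop :=
  (∀ p : List Bool, p <+: w → p.count false ≤ p.count true) ∧
    w.count true = w.count false

/-- The number of centered tunnels of a word `w` of length `2m`:
the number of (0-indexed) `i < m` such that `w_i = a`, `w_{2m-1-i} = b`, and the
factor strictly between these two positions is a Dyck word. -/
noncomputable def ct (w : List Bool) : ℕ :=
  ((Finset.range (w.length / 2)).filter (fun i =>
    w.getD i false = true ∧ w.getD (w.length - 1 - i) true = false ∧
      IsDyck ((w.drop (i + 1)).take (w.length - 2 * (i + 1))))).card

/-- `Omega w`: the number of irreducible factors of the Dyck word `w`, i.e. the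
number of nonempty prefixes of `w` that are Dyck words (returns to height 0). -/
noncomputable def Omega (w : List Bool) : ℕ :=
  ((Finset.range w.length).filter (fun i => IsDyck (w.take (i + 1)))).card

/-- `blocksCount l n`: the number of connected components of `⋃_{d ∣ n} [d, l·d] ⊆ ℝ`. -/
noncomputable def blocksCount (l : ℝ) (n : ℕ) : ℕ :=
  Nat.card (ConnectedComponents (↥(⋃ d ∈ n.divisors, Set.Icc (d : ℝ) (l * d))))

/-- `middleCount l n`: the number of divisors `d` of `n` with `√(n/l) < d ≤ √(l·n)`. -/
noncomputable def middleCount (l : ℝ) (n : ℕ) : ℕ :=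
  (n.divisors.filter (fun d => Real.sqrt (n / l) < (d : ℝ) ∧ (d : ℝ) ≤ Real.sqrt (l * n))).card

/-- The height of a word: the maximum over all prefixes of (#a − #b). -/
def wordHeight (w : List Bool) : ℕ :=
  (Finset.range (w.length + 1)).sup (fun i => (w.take i).count true - (w.take i).count false)

/-- `ellAB w` for a word of length `2m`: the number of (0-indexed) `i < m`
with `w_i = a` and `w_{2m-1-i} = b`. -/
def ellAB (w : List Bool) : ℕ :=
  ((Finset.range (w.length / 2)).filter (fun i =>
    w.getD i false = true ∧ w.getD (w.length - 1 - i) true = false)).card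

/-- `n` is the semi-perimeter of a Pythagorean triangle. -/
def IsPythSemiPerimeter (n : ℕ) : Prop :=
  ∃ x y z : ℕ, 0 < x ∧ 0 < y ∧ 0 < z ∧ x ^ 2 + y ^ 2 = z ^ 2 ∧ x + y + z = 2 * n

/-- `n` is even-trapezoidal: it admits a partition into an even number of
consecutive parts. -/
def IsEvenTrapezoidal (n : ℕ) : Prop :=
  ∃ a m : ℕ, 1 ≤ a ∧ 1 ≤ m ∧ n = ∑ k ∈ Finset.range (2 * m), (a + k)


section HoftAux
open Set Finset

open Set Finset

lemma hoft_gap_empty {k : ℕ} {a b : ℕ → ℝ}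
    (ha : ∀ i j, i ≤ j → j < k → a i ≤ a j)
    (hb : ∀ i j, i ≤ j → j < k → b i ≤ b j)
    {i : ℕ} (hi : i + 1 < k) {z : ℝ} (h1 : b i < z) (h2 : z < a (i+1)) :
    z ∉ ⋃ m ∈ Finset.range k, Set.Icc (a m) (b m) := by
  intro hz
  simp only [Set.mem_iUnion, Finset.mem_range, Set.mem_Icc, exists_prop] at hz
  obtain ⟨j, hj, hj1, hj2⟩ := hz
  rcases le_or_gt j i with h | h
  · exact absurd (hj2.trans (hb j i h (by omega))) (not_le.mpr h1)
  · exact absurd ((ha (i+1) j h hj).trans hj1) (not_le.mpr h2)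

lemma even_card_of_fpf {S : Finset ℕ} {σ : ℕ → ℕ}
    (hmem : ∀ i ∈ S, σ i ∈ S) (hinv : ∀ i ∈ S, σ (σ i) = i) (hne : ∀ i ∈ S, σ i ≠ i) :
    Even S.card := by
  have h : ∑ _x ∈ S, (1 : ZMod 2) = 0 :=
    Finset.sum_involution (fun i _ => σ i) (fun i hi => by decide)
      (fun i hi _ => hne i hi) (fun i hi => hmem i hi) (fun i hi => hinv i hi)
  rw [Finset.sum_const, nsmul_eq_mul, mul_one] at h
  rw [ZMod.natCast_eq_zero_iff] at h
  exact even_iff_two_dvd.mpr h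

lemma hoft_parity {k : ℕ} {S : Finset ℕ}
    (hS : ∀ i ∈ S, i < k - 1)
    (hsym : ∀ i ∈ S, k - 2 - i ∈ S) :
    Even S.card ↔ ∀ i ∈ S, 2 * i + 2 ≠ k := by
  constructor
  · intro hev
    by_contra h
    push_neg at h
    obtain ⟨i₀, hi₀S, hi₀⟩ := h
    have herase : Even ((S.erase i₀).card) := by
      apply even_card_of_fpf (σ := fun i => k - 2 - i)
      · intro i hi
        have hiS := Finset.mem_of_mem_erase hi
        have h1 : k - 2 - i ∈ S := hsym i hiS
        refine Finset.mem_erase.mpr ⟨?_, h1⟩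
        have h2 : i < k - 1 := hS i hiS
        have h3 : i ≠ i₀ := (Finset.mem_erase.mp hi).1
        omega
      · intro i hi
        have := hS i (Finset.mem_of_mem_erase hi); omega
      · intro i hi
        have h1 := hS i (Finset.mem_of_mem_erase hi)
        have h2 : i ≠ i₀ := (Finset.mem_erase.mp hi).1
        omega
    have hcard : S.card = (S.erase i₀).card + 1 := by
      rw [Finset.card_erase_of_mem hi₀S]
      have : 0 < S.card := Finset.card_pos.mpr ⟨i₀, hi₀S⟩
      omega
    rw [hcard, Nat.even_add_one] at hev
    exact hev herase
  · intro hnf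
    apply even_card_of_fpf (σ := fun i => k - 2 - i) hsym
    · intro i hi; have := hS i hi; omega
    · intro i hi; have h1 := hS i hi; have h2 := hnf i hi; omega

lemma nat_div_lt_div_of_dvd {n c d : ℕ} (hn : n ≠ 0) (hc : c ∣ n) (hd : d ∣ n) (h : c < d) :
    n / d < n / c := by
  have hc0 : 0 < c := Nat.pos_of_dvd_of_pos hc (Nat.pos_of_ne_zero hn)
  have h1 : n / d * d = n := Nat.div_mul_cancel hd
  have h2 : n / c * c = n := Nat.div_mul_cancel hc
  have hd0 : 0 < n / d := Nat.div_pos (Nat.le_of_dvd (Nat.pos_of_ne_zero hn) hd) (by omega)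
  by_contra hle
  push_neg at hle
  nlinarith [Nat.mul_le_mul_right c hle]


-- reflection fact
lemma hoft_refl {n : ℕ} (hn : n ≠ 0) {k : ℕ} (hk' : n.divisors.card = k)
    (i : Fin k) : (n.divisors.orderEmbOfFin hk') i * (n.divisors.orderEmbOfFin hk') i.rev = n := by
  set E := n.divisors.orderEmbOfFin hk' with hE
  have hEmem : ∀ i, E i ∈ n.divisors := fun i => Finset.orderEmbOfFin_mem _ _ i
  have hEdvd : ∀ i, E i ∣ n := fun i => (Nat.mem_divisors.mp (hEmem i)).1
  have hF : StrictMono (fun i : Fin k => n / E i.rev) := by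
    intro i j hij
    have h1 : E j.rev < E i.rev := E.strictMono (Fin.rev_lt_rev.mpr hij)
    exact nat_div_lt_div_of_dvd hn (hEdvd j.rev) (hEdvd i.rev) h1
  have hrange : Set.range (fun i : Fin k => n / E i.rev) = Set.range E := by
    rw [Finset.range_orderEmbOfFin]
    ext d
    simp only [Set.mem_range, Finset.mem_coe]
    constructor
    · rintro ⟨i, rfl⟩
      rw [Nat.mem_divisors]
      exact ⟨Nat.div_dvd_of_dvd (hEdvd i.rev), hn⟩
    · intro hd
      have hdn : d ∣ n := (Nat.mem_divisors.mp hd).1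
      have hnd : n / d ∈ n.divisors := Nat.mem_divisors.mpr ⟨Nat.div_dvd_of_dvd hdn, hn⟩
      have : n / d ∈ Set.range E := by rw [Finset.range_orderEmbOfFin]; exact hnd
      obtain ⟨j, hj⟩ := this
      refine ⟨j.rev, ?_⟩
      simp only [Fin.rev_rev]
      rw [hj]
      exact Nat.div_div_self hdn hn
  have inst : WellFoundedLT (Fin k) := inferInstance
  have heq : (fun i : Fin k => n / E i.rev) = (fun i => E i) := (StrictMono.range_inj hF E.strictMono).mp hrange
  have h1 : E i = n / E i.rev := (congrFun heq i).symm
  rw [h1]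
  exact Nat.div_mul_cancel (hEdvd i.rev)

lemma hoft_components (k : ℕ) (hk : 0 < k) (a b : ℕ → ℝ)
    (hab : ∀ i, i < k → a i ≤ b i)
    (haS : ∀ i j, i < j → j < k → a i < a j)
    (hb : ∀ i j, i ≤ j → j < k → b i ≤ b j) :
    Nat.card (ConnectedComponents ↥(⋃ i ∈ Finset.range k, Set.Icc (a i) (b i))) =
      ((Finset.range (k-1)).filter fun i => b i < a (i+1)).card + 1 := by
  have ha : ∀ i j, i ≤ j → j < k → a i ≤ a j := fun i j hij hj =>
    hij.lt_or_eq.elim (fun h => (haS i j h hj).le) (fun h => by rw [h])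
  set U : Set ℝ := ⋃ i ∈ Finset.range k, Set.Icc (a i) (b i) with hU
  set G : Finset ℕ := (Finset.range (k-1)).filter (fun i => b i < a (i+1)) with hG
  set g : ℕ := G.card with hg
  have hGlt : ∀ i ∈ G, i + 1 < k := by
    intro i hi; rw [hG, Finset.mem_filter, Finset.mem_range] at hi; omega
  have hGgap : ∀ i ∈ G, b i < a (i+1) := fun i hi => (Finset.mem_filter.mp hi).2
  have hmemU : ∀ i, i < k → a i ∈ U := by
    intro i hi
    simp only [hU, Set.mem_iUnion, Finset.mem_range, Set.mem_Icc, exists_prop]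
    exact ⟨i, hi, le_refl _, hab i hi⟩
  set f : ℝ → ℕ := fun x => (G.filter (fun i => a (i+1) ≤ x)).card with hf
  have hfsub : ∀ x y : ℝ, x ≤ y →
      G.filter (fun i => a (i+1) ≤ x) ⊆ G.filter (fun i => a (i+1) ≤ y) := by
    intro x y hxy i hi
    rw [Finset.mem_filter] at hi ⊢
    exact ⟨hi.1, hi.2.trans hxy⟩
  -- claim 2 : equal f values imply the whole interval is inside U
  have claim2 : ∀ x ∈ U, ∀ y ∈ U, x ≤ y → f x = f y → Set.Icc x y ⊆ U := by
    intro x hx y hy hxy hfxy z hz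
    by_contra hzU
    obtain ⟨ix, hix, hix1, _⟩ : ∃ i, i < k ∧ a i ≤ x ∧ x ≤ b i := by
      simpa only [hU, Set.mem_iUnion, Finset.mem_range, Set.mem_Icc, exists_prop] using hx
    obtain ⟨iy, hiy, hiy1, hiy2⟩ : ∃ i, i < k ∧ a i ≤ y ∧ y ≤ b i := by
      simpa only [hU, Set.mem_iUnion, Finset.mem_range, Set.mem_Icc, exists_prop] using hy
    have hzx : x ≤ z := hz.1
    have hzy : z ≤ y := hz.2
    set S : Finset ℕ := (Finset.range k).filter (fun i => a i ≤ z) with hS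
    have hSne : S.Nonempty := ⟨ix, by simp [hS, hix, hix1.trans hzx]⟩
    set i := S.max' hSne with hi
    have hiS : i ∈ S := S.max'_mem hSne
    have hik : i < k := by
      have := Finset.mem_filter.mp hiS
      exact Finset.mem_range.mp this.1
    have hiz : a i ≤ z := (Finset.mem_filter.mp hiS).2
    have hmax : ∀ j, j < k → a j ≤ z → j ≤ i := fun j hj hjz =>
      S.le_max' j (by simp [hS, hj, hjz])
    have hbi : b i < z := by
      by_contra h
      apply hzU
      simp only [hU, Set.mem_iUnion, Finset.mem_range, Set.mem_Icc, exists_prop]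
      exact ⟨i, hik, hiz, not_lt.mp h⟩
    rcases Nat.lt_or_ge (i+1) k with hik1 | hik1
    · have hai1 : z < a (i+1) := by
        by_contra h
        have := hmax (i+1) hik1 (not_lt.mp h)
        omega
      have hiG : i ∈ G := by
        rw [hG, Finset.mem_filter, Finset.mem_range]
        exact ⟨by omega, hbi.trans hai1⟩
      have hy1 : a (i+1) ≤ y := by
        rcases le_or_gt iy i with h | h
        · exact absurd (hiy2.trans (hb iy i h hik))
            (not_le.mpr (lt_of_lt_of_le hbi hzy))
        · exact (ha (i+1) iy h hiy).trans hiy1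
      have hx1 : ¬ a (i+1) ≤ x := fun h => absurd (h.trans hzx) (not_le.mpr hai1)
      have hss : G.filter (fun m => a (m+1) ≤ x) ⊂ G.filter (fun m => a (m+1) ≤ y) := by
        refine ⟨hfsub x y hxy, fun hsub => hx1 ?_⟩
        exact (Finset.mem_filter.mp (hsub (Finset.mem_filter.mpr ⟨hiG, hy1⟩))).2
      exact absurd hfxy (Finset.card_lt_card hss).ne
    · have hzb : z ≤ b i := by
        have h1 : y ≤ b (k-1) := hiy2.trans (hb iy (k-1) (by omega) (by omega))
        have h2 : i = k - 1 := by omega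
        rw [h2]; exact hzy.trans h1
      exact absurd hzb (not_le.mpr hbi)
  -- claim 2' : interval inside U implies equal f values
  have claim2' : ∀ x ∈ U, ∀ y ∈ U, x ≤ y → Set.Icc x y ⊆ U → f x = f y := by
    intro x hx y hy hxy hIcc
    by_contra hne
    have hsub := hfsub x y hxy
    have hnee : G.filter (fun i => a (i+1) ≤ x) ≠ G.filter (fun i => a (i+1) ≤ y) := by
      intro h; exact hne (by rw [hf]; simp only; rw [h])
    obtain ⟨i, hiy', hix'⟩ := Finset.exists_of_ssubset (lt_of_le_of_ne hsub hnee)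
    rw [Finset.mem_filter] at hiy'
    obtain ⟨hiG, hiy1⟩ := hiy'
    have hix1 : ¬ a (i+1) ≤ x := fun h => hix' (Finset.mem_filter.mpr ⟨hiG, h⟩)
    push_neg at hix1
    set w : ℝ := max x (b i) with hw
    have hw1 : w < a (i+1) := max_lt hix1 (hGgap i hiG)
    set z : ℝ := (w + a (i+1)) / 2 with hz
    have hz1 : w < z := by rw [hz]; linarith
    have hz2 : z < a (i+1) := by rw [hz]; linarith
    have hzU : z ∉ U := hoft_gap_empty ha hb (hGlt i hiG) (lt_of_le_of_lt (le_max_right x (b i)) hz1) hz2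
    apply hzU
    apply hIcc
    constructor
    · exact le_of_lt (lt_of_le_of_lt (le_max_left x (b i)) hz1)
    · exact le_trans hz2.le hiy1
  -- same component iff same f value
  have same_comp_iff : ∀ (x : ℝ) (hx : x ∈ U) (y : ℝ) (hy : y ∈ U),
      (ConnectedComponents.mk (⟨x, hx⟩ : U) = ConnectedComponents.mk ⟨y, hy⟩) ↔ f x = f y := by
    intro x hx y hy
    constructor
    · intro h
      have hmem : (⟨x, hx⟩ : U) ∈ connectedComponent (⟨y, hy⟩ : U) :=
        (ConnectedComponents.coe_eq_coe').mp h
      have hpc : IsPreconnected (Subtype.val '' connectedComponent (⟨y, hy⟩ : U)) :=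
        Topology.IsInducing.subtypeVal.isPreconnected_image.mpr isPreconnected_connectedComponent
      have hoc := hpc.ordConnected
      have hxm : x ∈ Subtype.val '' connectedComponent (⟨y, hy⟩ : U) := ⟨_, hmem, rfl⟩
      have hym : y ∈ Subtype.val '' connectedComponent (⟨y, hy⟩ : U) :=
        ⟨_, mem_connectedComponent, rfl⟩
      have hsubU : Subtype.val '' connectedComponent (⟨y, hy⟩ : U) ⊆ U := by
        rintro _ ⟨⟨z, hzz⟩, _, rfl⟩; exact hzz
      rcases le_total x y with hxy | hxy
      · exact claim2' x hx y hy hxy ((hoc.out hxm hym).trans hsubU)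
      · exact (claim2' y hy x hx hxy ((hoc.out hym hxm).trans hsubU)).symm
    · intro h
      rcases le_total x y with hxy | hxy
      · have hIcc := claim2 x hx y hy hxy h
        have hpre : IsPreconnected (Subtype.val ⁻¹' (Set.Icc x y) : Set U) := by
          rw [← Topology.IsInducing.subtypeVal.isPreconnected_image,
            Subtype.image_preimage_coe, Set.inter_eq_self_of_subset_right hIcc]
          exact isPreconnected_Icc
        have h1 : (⟨x, hx⟩ : U) ∈ (Subtype.val ⁻¹' (Set.Icc x y) : Set U) := by
          simp [Set.mem_preimage, le_refl, hxy]
        have h2 : (⟨y, hy⟩ : U) ∈ (Subtype.val ⁻¹' (Set.Icc x y) : Set U) := by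
          simp [Set.mem_preimage, le_refl, hxy]
        rw [ConnectedComponents.coe_eq_coe']
        exact hpre.subset_connectedComponent h2 h1
      · have hIcc := claim2 y hy x hx hxy h.symm
        have hpre : IsPreconnected (Subtype.val ⁻¹' (Set.Icc y x) : Set U) := by
          rw [← Topology.IsInducing.subtypeVal.isPreconnected_image,
            Subtype.image_preimage_coe, Set.inter_eq_self_of_subset_right hIcc]
          exact isPreconnected_Icc
        have h1 : (⟨x, hx⟩ : U) ∈ (Subtype.val ⁻¹' (Set.Icc y x) : Set U) := by
          simp [Set.mem_preimage, le_refl, hxy]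
        have h2 : (⟨y, hy⟩ : U) ∈ (Subtype.val ⁻¹' (Set.Icc y x) : Set U) := by
          simp [Set.mem_preimage, le_refl, hxy]
        rw [ConnectedComponents.coe_eq_coe']
        exact hpre.subset_connectedComponent h2 h1
  -- representatives
  set emb : Fin g ↪o ℕ := G.orderEmbOfFin hg.symm with hemb
  have hembG : ∀ j : Fin g, emb j ∈ G := fun j => Finset.orderEmbOfFin_mem G hg.symm j
  set σ : ℕ → ℕ := fun j => if h : j < g then emb ⟨j, h⟩ else 0 with hσ
  set rep : ℕ → ℝ := fun c => if c = 0 then a 0 else a (σ (c-1) + 1) with hrep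
  have repU : ∀ c, c ≤ g → rep c ∈ U := by
    intro c hc
    rcases Nat.eq_zero_or_pos c with rfl | hc0
    · simpa [hrep] using hmemU 0 hk
    · have hcg : c - 1 < g := by omega
      have hσG : σ (c-1) ∈ G := by
        simp only [hσ, dif_pos hcg]; exact hembG _
      have : rep c = a (σ (c-1) + 1) := by simp [hrep]; omega
      rw [this]
      exact hmemU _ (hGlt _ hσG)
  have frep : ∀ c, c ≤ g → f (rep c) = c := by
    intro c hc
    rcases Nat.eq_zero_or_pos c with rfl | hc0
    · have : G.filter (fun i => a (i+1) ≤ rep 0) = ∅ := by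
        rw [Finset.filter_eq_empty_iff]
        intro i hiG
        have h1 : a 0 < a (i+1) := haS 0 (i+1) (by omega) (hGlt i hiG)
        simp only [hrep, if_pos rfl]
        exact not_le.mpr h1
      simp only [hf, this, Finset.card_empty]
    · have hcg : c - 1 < g := by omega
      have hrepc : rep c = a (σ (c-1) + 1) := by simp [hrep]; omega
      have hσval : σ (c-1) = emb ⟨c-1, hcg⟩ := by simp [hσ, hcg]
      have hfilter : G.filter (fun i => a (i+1) ≤ rep c) =
          (Finset.Iic (⟨c-1, hcg⟩ : Fin g)).image (fun j => (emb j : ℕ)) := by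
        ext m
        simp only [Finset.mem_filter, Finset.mem_image, Finset.mem_Iic]
        constructor
        · rintro ⟨hmG, hm⟩
          have hmrange : m ∈ Set.range emb := by
            rw [Finset.range_orderEmbOfFin]; exact hmG
          obtain ⟨j, rfl⟩ := hmrange
          refine ⟨j, ?_, rfl⟩
          rw [← emb.le_iff_le]
          rw [hrepc, hσval] at hm
          by_contra hlt
          push_neg at hlt
          have : a (emb ⟨c-1, hcg⟩ + 1) < a (emb j + 1) :=
            haS _ _ (by omega) (hGlt _ (hembG j))
          linarith [hm]
        · rintro ⟨j, hj, rfl⟩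
          refine ⟨hembG j, ?_⟩
          rw [hrepc, hσval]
          have : emb j ≤ emb ⟨c-1, hcg⟩ := emb.le_iff_le.mpr hj
          exact ha _ _ (by omega) (hGlt _ (hembG ⟨c-1, hcg⟩))
      rw [hf]
      simp only
      rw [hfilter, Finset.card_image_of_injective _ emb.injective, Fin.card_Iic]
      simp only [Fin.val_mk]
      omega
  -- the bijection
  have hbij : Function.Bijective
      (fun c : Fin (g+1) => ConnectedComponents.mk (⟨rep c.val, repU c.val (Fin.is_le c)⟩ : U)) := by
    constructor
    · intro c c' h
      have h2 := (same_comp_iff _ _ _ _).mp h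
      rw [frep _ (Fin.is_le c), frep _ (Fin.is_le c')] at h2
      exact Fin.ext h2
    · intro q
      obtain ⟨⟨x, hx⟩, rfl⟩ := ConnectedComponents.surjective_coe q
      have hfx : f x ≤ g := Finset.card_le_card (Finset.filter_subset _ _)
      refine ⟨⟨f x, by omega⟩, ?_⟩
      exact (same_comp_iff _ _ _ _).mpr (by rw [frep _ hfx])
  have hcard : Nat.card (ConnectedComponents ↥U) = g + 1 := by
    rw [← Nat.card_eq_of_bijective _ hbij]
    simp [Nat.card_eq_fintype_card]
  exact hcard
end HoftAux

/-- Generalized Höft theorem: `n` has a `λ`-middle divisor iff `blocks_λ(n)` is odd. -/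
theorem middle_pos_iff_blocks_odd (l : ℝ) (hl : 1 < l) (n : ℕ) (hn : 1 ≤ n) :
    0 < middleCount l n ↔ Odd (blocksCount l n) := by
  have hn0 : n ≠ 0 := by omega
  have hl0 : (0:ℝ) < l := by linarith
  have hnR : (0:ℝ) < n := by exact_mod_cast Nat.pos_of_ne_zero hn0
  set k : ℕ := n.divisors.card with hk'
  have hk : 0 < k := Finset.card_pos.mpr (Nat.nonempty_divisors.mpr hn0)
  set E : Fin k ↪o ℕ := n.divisors.orderEmbOfFin hk'.symm with hE
  have hEmem : ∀ i, E i ∈ n.divisors := fun i => Finset.orderEmbOfFin_mem _ _ i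
  have hEsurj : ∀ d ∈ n.divisors, ∃ i, E i = d := by
    intro d hd
    have : d ∈ Set.range E := by rw [Finset.range_orderEmbOfFin]; exact hd
    exact this
  have hrefl : ∀ i : Fin k, E i * E i.rev = n := fun i => hoft_refl hn0 hk'.symm i
  set a : ℕ → ℝ := fun i => if h : i < k then ((E ⟨i, h⟩ : ℕ) : ℝ) else 0 with ha'
  set b : ℕ → ℝ := fun i => l * a i with hb'
  have haval : ∀ (i : ℕ) (h : i < k), a i = ((E ⟨i, h⟩ : ℕ) : ℝ) := by
    intro i h; simp [ha', h]
  have hapos : ∀ i, i < k → 0 < a i := by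
    intro i h
    rw [haval i h]
    exact_mod_cast Nat.pos_of_mem_divisors (hEmem ⟨i, h⟩)
  have haS : ∀ i j, i < j → j < k → a i < a j := by
    intro i j hij hj
    rw [haval i (by omega), haval j hj]
    exact_mod_cast E.strictMono (Fin.mk_lt_mk.mpr hij)
  have hamono : ∀ i j, i ≤ j → j < k → a i ≤ a j := fun i j hij hj =>
    hij.lt_or_eq.elim (fun h => (haS i j h hj).le) (fun h => by rw [h])
  have hab : ∀ i, i < k → a i ≤ b i := by
    intro i h
    simp only [hb']
    nlinarith [hapos i h]
  have hbmono : ∀ i j, i ≤ j → j < k → b i ≤ b j := by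
    intro i j hij hj
    simp only [hb']
    exact mul_le_mul_of_nonneg_left (hamono i j hij hj) hl0.le
  have hreflR : ∀ i, i < k → a i * a (k-1-i) = (n:ℝ) := by
    intro i h
    have h2 : k - 1 - i < k := by omega
    rw [haval i h, haval _ h2]
    have h3 : (⟨k-1-i, h2⟩ : Fin k) = (⟨i, h⟩ : Fin k).rev := by
      apply Fin.ext
      simp only [Fin.val_rev]
      omega
    rw [h3]
    exact_mod_cast hrefl ⟨i, h⟩
  have hUeq : (⋃ d ∈ n.divisors, Set.Icc (d:ℝ) (l*d)) =
      ⋃ i ∈ Finset.range k, Set.Icc (a i) (b i) := by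
    ext x
    simp only [Set.mem_iUnion, Finset.mem_range, exists_prop]
    constructor
    · rintro ⟨d, hd, hx⟩
      obtain ⟨i, rfl⟩ := hEsurj d hd
      refine ⟨i.val, i.isLt, ?_⟩
      have hval : a i.val = ((E i : ℕ) : ℝ) := by rw [haval i.val i.isLt, Fin.eta]
      simp only [hb', hval]
      exact hx
    · rintro ⟨i, hi, hx⟩
      refine ⟨E ⟨i, hi⟩, hEmem _, ?_⟩
      simp only [hb', haval i hi] at hx
      exact hx
  set G : Finset ℕ := (Finset.range (k-1)).filter (fun i => b i < a (i+1)) with hG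
  have hblocks : blocksCount l n = G.card + 1 := by
    unfold blocksCount
    rw [hUeq]
    exact hoft_components k hk a b hab haS hbmono
  have hGmem : ∀ i ∈ G, i < k - 1 := fun i hi => Finset.mem_range.mp (Finset.mem_filter.mp hi).1
  have hGgap : ∀ i ∈ G, l * a i < a (i+1) := by
    intro i hi
    have h := (Finset.mem_filter.mp hi).2
    simpa only [hb'] using h
  have hGsym : ∀ i ∈ G, k - 2 - i ∈ G := by
    intro i hi
    have h1 : i < k - 1 := hGmem i hi
    have h2 : l * a i < a (i+1) := hGgap i hi
    have hpq : a i * a (k-1-i) = n := hreflR i (by omega)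
    have hqq : a (i+1) * a (k-2-i) = n := by
      have := hreflR (i+1) (by omega)
      have he : k - 1 - (i+1) = k - 2 - i := by omega
      rw [he] at this
      exact this
    have hp0 : 0 < a i := hapos i (by omega)
    have hq0 : 0 < a (i+1) := hapos (i+1) (by omega)
    have hp'0 : 0 < a (k-1-i) := hapos _ (by omega)
    have hq'0 : 0 < a (k-2-i) := hapos _ (by omega)
    rw [hG, Finset.mem_filter, Finset.mem_range]
    refine ⟨by omega, ?_⟩
    have hgoal : l * a (k-2-i) < a (k-1-i) := by
      have key : l * a (k-2-i) * (a i * a (i+1)) < a (k-1-i) * (a i * a (i+1)) := by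
        have c1 : l * a (k-2-i) * (a i * a (i+1)) = (l * a i) * (a (i+1) * a (k-2-i)) := by ring
        have c2 : a (k-1-i) * (a i * a (i+1)) = a (i+1) * (a i * a (k-1-i)) := by ring
        rw [c1, c2, hqq, hpq]
        exact mul_lt_mul_of_pos_right h2 hnR
      exact lt_of_mul_lt_mul_right key (by positivity)
    have he2 : k - 2 - i + 1 = k - 1 - i := by omega
    simp only [hb', he2]
    exact hgoal
  have hOdd : Odd (blocksCount l n) ↔ ∀ i ∈ G, 2*i+2 ≠ k := by
    rw [hblocks, Nat.odd_add_one, Nat.not_odd_iff_even]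
    exact hoft_parity hGmem hGsym
  have hmc : 0 < middleCount l n ↔
      ∃ d : ℕ, d ∈ n.divisors ∧ (n:ℝ) < l * (d:ℝ)^2 ∧ ((d:ℝ))^2 ≤ l * n := by
    unfold middleCount
    rw [Finset.card_pos, Finset.filter_nonempty_iff]
    constructor
    · rintro ⟨x, hx, h1, h2⟩
      simp only [Finset.bind_def, Finset.mem_sup] at hx
      obtain ⟨d, hd, hxd⟩ := hx
      rw [show (pure ((d:ℕ):ℝ) : Finset ℝ) = {((d:ℕ):ℝ)} from rfl,
        Finset.mem_singleton] at hxd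
      subst hxd
      have hd0 : (0:ℝ) < d := by exact_mod_cast Nat.pos_of_mem_divisors hd
      refine ⟨d, hd, ?_, (Real.le_sqrt' hd0).mp h2⟩
      have h3 := (Real.sqrt_lt' hd0).mp h1
      rw [div_lt_iff₀' hl0] at h3
      exact h3
    · rintro ⟨d, hd, h1, h2⟩
      have hd0 : (0:ℝ) < d := by exact_mod_cast Nat.pos_of_mem_divisors hd
      refine ⟨(d:ℝ), ?_, ?_, ?_⟩
      · simp only [Finset.bind_def, Finset.mem_sup]
        exact ⟨d, hd, by
          rw [show (pure ((d:ℕ):ℝ) : Finset ℝ) = {((d:ℕ):ℝ)} from rfl, Finset.mem_singleton]⟩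
      · rw [Real.sqrt_lt' hd0, div_lt_iff₀' hl0]; exact h1
      · rw [Real.le_sqrt' hd0]; exact h2
  rw [hmc, hOdd]
  constructor
  · rintro ⟨d, hd, hd1, hd2⟩ i hiG hik
    clear hblocks hOdd hmc hUeq
    have h1 : i < k - 1 := hGmem i hiG
    have h2 : l * a i < a (i+1) := hGgap i hiG
    have hpq : a i * a (i+1) = n := by
      have := hreflR i (by omega)
      have he : k - 1 - i = i + 1 := by omega
      rw [he] at this
      exact this
    have hln : l * (a i * a (i+1)) = l * n := by rw [hpq]
    obtain ⟨j, rfl⟩ := hEsurj d hd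
    have hdj : a j.val = ((E j : ℕ) : ℝ) := by rw [haval j.val j.isLt, Fin.eta]
    have hp0 : 0 < a i := hapos i (by omega)
    have hq0 : 0 < a (i+1) := hapos (i+1) (by omega)
    rcases Nat.lt_or_ge j.val (i+1) with hj | hj
    · have hle : ((E j : ℕ) : ℝ) ≤ a i := by
        rw [← hdj]; exact hamono j.val i (by omega) (by omega)
      have hd0 : (0:ℝ) ≤ ((E j : ℕ) : ℝ) := by positivity
      nlinarith [mul_lt_mul_of_pos_right h2 hp0, mul_self_le_mul_self hd0 hle]
    · have hge : a (i+1) ≤ ((E j : ℕ) : ℝ) := by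
        rw [← hdj]; exact hamono (i+1) j.val hj j.isLt
      nlinarith [mul_lt_mul_of_pos_right h2 hq0, mul_self_le_mul_self hq0.le hge]
  · intro H
    clear hblocks hOdd hmc hUeq
    rcases Nat.even_or_odd k with hke | hko
    · -- k even
      obtain ⟨r, hr⟩ := hke
      set m : ℕ := k/2 - 1 with hm
      have hmk : m < k - 1 := by omega
      have hnotG : m ∉ G := fun hmem => (H m hmem) (by omega)
      have hq_le : a (m+1) ≤ l * a m := by
        by_contra hlt
        push_neg at hlt
        apply hnotG
        rw [hG, Finset.mem_filter, Finset.mem_range]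
        refine ⟨hmk, ?_⟩
        simp only [hb']
        exact hlt
      have hpq : a m * a (m+1) = n := by
        have := hreflR m (by omega)
        have he : k - 1 - m = m + 1 := by omega
        rw [he] at this
        exact this
      have hln : l * (a m * a (m+1)) = l * n := by rw [hpq]
      have hp0 : 0 < a m := hapos m (by omega)
      have hq0 : 0 < a (m+1) := hapos (m+1) (by omega)
      have hplt : a m < a (m+1) := haS m (m+1) (by omega) (by omega)
      rcases lt_or_ge (n:ℝ) (l * (a m)^2) with hcase | hcase
      · refine ⟨E ⟨m, by omega⟩, hEmem _, ?_, ?_⟩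
        · rw [← haval m (by omega)]; exact hcase
        · rw [← haval m (by omega)]
          nlinarith [mul_lt_mul_of_pos_left hplt hp0]
      · refine ⟨E ⟨m+1, by omega⟩, hEmem _, ?_, ?_⟩
        · rw [← haval (m+1) (by omega)]
          nlinarith [mul_lt_mul_of_pos_right hplt hq0, mul_pos hq0 hq0]
        · rw [← haval (m+1) (by omega)]
          nlinarith [mul_le_mul_of_nonneg_right hq_le hq0.le]
    · -- k odd
      obtain ⟨r, hr⟩ := hko
      have hmk : r < k := by omega
      have hdd : a r * a r = n := by
        have := hreflR r (by omega)
        have he : k - 1 - r = r := by omega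
        rw [he] at this
        exact this
      refine ⟨E ⟨r, hmk⟩, hEmem _, ?_, ?_⟩
      · rw [← haval r hmk]
        nlinarith
      · rw [← haval r hmk]
        nlinarith
end

section
/- Let n ≥ 1 be an integer. Then n is a power of 2 (including n = 1) if and only if n is neither even-trapezoidal nor the semi-perimeter of a Pythagorean triangle. -/
open scoped Classical symmDiff

private lemma sum_consec (a m : ℕ) :
    (∑ k ∈ Finset.range (2 * m), (a + k)) + m = m * (2 * a + 2 * m) := by
  induction m with
  | zero => simp
  | succ m ih =>
    rw [show 2 * (m + 1) = (2 * m) + 1 + 1 by ring, Finset.sum_range_succ,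
      Finset.sum_range_succ]
    zify at ih ⊢
    linear_combination ih

private lemma trap_odd_factor {n : ℕ} (h : IsEvenTrapezoidal n) :
    ∃ q, q ∣ n ∧ Odd q ∧ 3 ≤ q := by
  obtain ⟨a, m, ha, hm, hsum⟩ := h
  obtain ⟨X, hX⟩ : ∃ X, 2 * a + 2 * m = X + 1 := ⟨2 * a + 2 * m - 1, by omega⟩
  refine ⟨X, ⟨m, ?_⟩, ⟨a + m - 1, by omega⟩, by omega⟩
  have h1 := sum_consec a m
  rw [hX] at h1
  have h2 : m * (X + 1) = X * m + m := by ring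
  rw [h2] at h1
  omega

private lemma pow_two_no_odd {s q : ℕ} (hq : q ∣ 2 ^ s) (hodd : Odd q) : q = 1 := by
  obtain ⟨i, hi, rfl⟩ := (Nat.dvd_prime_pow Nat.prime_two).mp hq
  rcases Nat.eq_zero_or_pos i with h | h
  · simp [h]
  · exfalso
    have h2 : 2 ∣ 2 ^ i := dvd_pow_self 2 (by omega)
    rw [Nat.odd_iff] at hodd
    omega

private lemma not_semi_pow (s : ℕ) : ¬ IsPythSemiPerimeter (2 ^ s) := by
  rintro ⟨x, y, z, hx, hy, hz, hpy, hsum⟩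
  have hM : x + y + z = 2 ^ (s + 1) := by rw [pow_succ]; omega
  have hxM : x < 2 ^ (s + 1) := by omega
  have hyM : y < 2 ^ (s + 1) := by omega
  have key : (2 : ℤ) * ((2 ^ (s + 1) - (x : ℤ)) * (2 ^ (s + 1) - (y : ℤ))) = 2 ^ (2 * s + 2) := by
    have hpz : (x : ℤ) ^ 2 + (y : ℤ) ^ 2 = (z : ℤ) ^ 2 := by exact_mod_cast hpy
    have hN : (x : ℤ) + y + z = 2 ^ (s + 1) := by exact_mod_cast hM
    have hMM : (2 : ℤ) ^ (s + 1) * 2 ^ (s + 1) = 2 ^ (2 * s + 2) := by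
      rw [← pow_add]
      congr 1
      omega
    linear_combination (-1 : ℤ) * hpz - ((2 : ℤ) ^ (s + 1) - (x : ℤ) - y + z) * hN + hMM
  have keyN : 2 * ((2 ^ (s + 1) - x) * (2 ^ (s + 1) - y)) = 2 ^ (2 * s + 2) := by
    zify [hxM.le, hyM.le]
    linear_combination key
  obtain ⟨a, ha, hua⟩ := (Nat.dvd_prime_pow Nat.prime_two).mp
    (⟨2 * (2 ^ (s + 1) - y), by rw [← keyN]; ring⟩ : (2 ^ (s + 1) - x) ∣ 2 ^ (2 * s + 2))
  obtain ⟨b, hb, hub⟩ := (Nat.dvd_prime_pow Nat.prime_two).mp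
    (⟨2 * (2 ^ (s + 1) - x), by rw [← keyN]; ring⟩ : (2 ^ (s + 1) - y) ∣ 2 ^ (2 * s + 2))
  have ha' : a ≤ s := by
    have h1 : 2 ^ a < 2 ^ (s + 1) := by omega
    have := (Nat.pow_lt_pow_iff_right one_lt_two).mp h1
    omega
  have hb' : b ≤ s := by
    have h1 : 2 ^ b < 2 ^ (s + 1) := by omega
    have := (Nat.pow_lt_pow_iff_right one_lt_two).mp h1
    omega
  have h3 : 2 ^ (a + b + 1) = 2 ^ (2 * s + 2) := by
    rw [hua, hub] at keyN
    rw [← keyN]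
    ring
  have h4 := Nat.pow_right_injective (le_refl 2) h3
  omega

private lemma not_pow_cases {n : ℕ} (hn : 1 ≤ n) (h : ¬ ∃ m, n = 2 ^ m) :
    IsEvenTrapezoidal n ∨ IsPythSemiPerimeter n := by
  have hne : n ≠ 0 := by omega
  obtain ⟨e, q, hfac, hodd⟩ : ∃ e q, 2 ^ e * q = n ∧ ¬ 2 ∣ q :=
    ⟨n.factorization 2, n / 2 ^ (n.factorization 2),
      Nat.ordProj_mul_ordCompl_eq_self n 2, Nat.not_dvd_ordCompl Nat.prime_two hne⟩
  have hqodd : q % 2 = 1 := by omega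
  have hq0 : q ≠ 0 := by rintro h0; rw [h0, mul_zero] at hfac; omega
  have hq1 : q ≠ 1 := by
    rintro h1
    rw [h1, mul_one] at hfac
    exact h ⟨e, hfac.symm⟩
  have hq3 : 3 ≤ q := by omega
  by_cases hcase : 2 ^ (e + 1) < q
  · left
    obtain ⟨t, ht⟩ : ∃ t, q = 2 * t + 1 := ⟨q / 2, by omega⟩
    have hte : 2 ^ e ≤ t := by
      have : 2 * 2 ^ e ≤ 2 * t := by rw [pow_succ] at hcase; omega
      omega
    refine ⟨t + 1 - 2 ^ e, 2 ^ e, by omega, Nat.one_le_two_pow, ?_⟩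
    have hs := sum_consec (t + 1 - 2 ^ e) (2 ^ e)
    rw [show 2 * (t + 1 - 2 ^ e) + 2 * 2 ^ e = q + 1 by omega] at hs
    have h5 : 2 ^ e * (q + 1) = n + 2 ^ e := by rw [← hfac]; ring
    rw [h5] at hs
    omega
  · right
    set j := Nat.log 2 q with hj
    have hj1 : 2 ^ j ≤ q := Nat.pow_log_le_self 2 hq0
    have hj2 : q < 2 ^ (j + 1) := Nat.lt_pow_succ_log_self one_lt_two q
    have hj0 : 1 ≤ j := by
      by_contra hc
      have : j = 0 := by omega
      rw [this] at hj2
      norm_num at hj2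
      omega
    have hjlt : 2 ^ j < q := by
      rcases Nat.lt_or_ge (2 ^ j) q with h' | h'
      · exact h'
      · exfalso
        have : 2 ^ j = q := by omega
        exact hodd (this ▸ dvd_pow_self 2 (by omega))
    have hje : j ≤ e := by
      have h1 : 2 ^ j < 2 ^ (e + 1) := by omega
      have := (Nat.pow_lt_pow_iff_right one_lt_two).mp h1
      omega
    obtain ⟨d, hd⟩ : ∃ d, e = j + d := ⟨e - j, by omega⟩
    set s := q - 2 ^ j with hsdef
    have hs1 : 1 ≤ s := by omega
    have hslt : s < 2 ^ j := by rw [pow_succ] at hj2; omega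
    have hss : s * s < 2 ^ j * 2 ^ j := Nat.mul_lt_mul'' hslt hslt
    have hqs : q = 2 ^ j + s := by omega
    have hn2 : n = 2 ^ (j + d) * (2 ^ j + s) := by rw [← hfac, ← hd, ← hqs]
    refine ⟨2 ^ d * (2 ^ j * 2 ^ j - s * s), 2 * (2 ^ d * (2 ^ j * s)),
      2 ^ d * (2 ^ j * 2 ^ j + s * s), ?_, ?_, ?_, ?_, ?_⟩
    · exact Nat.mul_pos (Nat.pow_pos (by norm_num : 0 < 2)) (by omega)
    · positivity
    · positivity
    · zify [hss.le]
      ring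
    · rw [hn2, pow_add]
      zify [hss.le]
      ring

/-- `n` is a power of 2 iff it is neither even-trapezoidal nor the
semi-perimeter of a Pythagorean triangle. -/
theorem pow_two_iff_not_trapezoidal_and_not_semiperimeter (n : ℕ) (hn : 1 ≤ n) :
    (∃ m : ℕ, n = 2 ^ m) ↔ ¬ IsEvenTrapezoidal n ∧ ¬ IsPythSemiPerimeter n := by
  constructor
  · rintro ⟨s, rfl⟩
    refine ⟨fun ht => ?_, not_semi_pow s⟩
    obtain ⟨q, hq, hodd, h3⟩ := trap_odd_factor ht
    have := pow_two_no_odd hq hodd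
    omega
  · rintro ⟨h1, h2⟩
    by_contra h
    rcases not_pow_cases hn h with h' | h' <;> tauto
end

section
/- Let n ≥ 1 be an integer. Then n is a power of 2 (including n = 1) if and only if n is 2-densely divisible and n is not the semi-perimeter of a Pythagorean triangle. -/
open scoped Classical symmDiff

open scoped Classical

-- auxiliary lemmas

lemma aux_card_one_of_connected {S : Set ℝ} (h : IsConnected S) :
    Nat.card (ConnectedComponents S) = 1 := by
  haveI := Subtype.connectedSpace h
  rw [Nat.card_eq_one_iff_unique]
  constructor
  · constructor
    intro a b
    obtain ⟨x, rfl⟩ := ConnectedComponents.surjective_coe a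
    obtain ⟨y, rfl⟩ := ConnectedComponents.surjective_coe b
    rw [ConnectedComponents.coe_eq_coe]
    simp
  · obtain ⟨x, hx⟩ := h.nonempty
    exact ⟨ConnectedComponents.mk ⟨x, hx⟩⟩

lemma aux_preconnected_of_card_one {S : Set ℝ}
    (h : Nat.card (ConnectedComponents S) = 1) : IsPreconnected S := by
  rw [Nat.card_eq_one_iff_unique] at h
  obtain ⟨hsub, hne⟩ := h
  rw [isPreconnected_iff_preconnectedSpace]
  obtain ⟨c⟩ := hne
  obtain ⟨x, rfl⟩ := ConnectedComponents.surjective_coe c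
  rw [preconnectedSpace_iff_connectedComponent]
  intro y
  have h1 : (ConnectedComponents.mk y) = ConnectedComponents.mk x := Subsingleton.elim _ _
  ext z
  simp only [Set.mem_univ, iff_true]
  have h2 : (ConnectedComponents.mk z) = ConnectedComponents.mk y := Subsingleton.elim _ _
  exact ConnectedComponents.coe_eq_coe'.mp h2

lemma aux_exists_odd_prime {n : ℕ} (hn : 1 ≤ n) (h : ¬ ∃ m : ℕ, n = 2 ^ m) :
    ∃ p : ℕ, p.Prime ∧ Odd p ∧ p ∣ n := by
  have hn0 : n ≠ 0 := by omega
  set q := ordCompl[2] n with hq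
  have hqd : q ∣ n := Nat.ordCompl_dvd n 2
  have hq0 : q ≠ 0 := by
    intro h0
    rw [h0] at hqd
    simp at hqd
    omega
  have hq1 : q ≠ 1 := by
    intro h1
    apply h
    refine ⟨n.factorization 2, ?_⟩
    have := Nat.ordProj_mul_ordCompl_eq_self n 2
    rw [← hq, h1, mul_one] at this
    omega
  have h2q : ¬ 2 ∣ q := Nat.not_dvd_ordCompl Nat.prime_two hn0
  refine ⟨q.minFac, Nat.minFac_prime hq1, ?_, (Nat.minFac_dvd q).trans hqd⟩
  refine (Nat.minFac_prime hq1).odd_of_ne_two ?_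
  intro h2
  exact h2q (h2 ▸ Nat.minFac_dvd q)

lemma aux_divisors_pow_succ (m : ℕ) :
    (2 ^ (m + 1) : ℕ).divisors = insert (2 ^ (m + 1)) (2 ^ m : ℕ).divisors := by
  ext d
  simp only [Nat.mem_divisors, Finset.mem_insert]
  constructor
  · rintro ⟨hd, -⟩
    obtain ⟨i, hi, rfl⟩ := (Nat.dvd_prime_pow Nat.prime_two).mp hd
    rcases Nat.lt_or_ge i (m + 1) with h | h
    · exact Or.inr ⟨pow_dvd_pow 2 (by omega), by positivity⟩
    · have : i = m + 1 := by omega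
      exact Or.inl (by rw [this])
  · rintro (rfl | ⟨hd, -⟩)
    · exact ⟨dvd_rfl, by positivity⟩
    · exact ⟨hd.trans (pow_dvd_pow 2 (by omega)), by positivity⟩

lemma aux_pow2_union (m : ℕ) :
    (⋃ d ∈ (2 ^ m : ℕ).divisors, Set.Icc (d : ℝ) (2 * d)) = Set.Icc 1 ((2:ℝ) ^ (m + 1)) := by
  induction m with
  | zero =>
    norm_num [Nat.divisors_one]
  | succ m ih =>
    rw [aux_divisors_pow_succ, Finset.set_biUnion_insert, ih, Set.union_comm]
    have h1 : ((2 ^ (m + 1) : ℕ) : ℝ) = (2:ℝ) ^ (m + 1) := by push_cast; ring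
    rw [h1]
    have h2 : (2:ℝ) * 2 ^ (m + 1) = 2 ^ (m + 1 + 1) := by ring
    rw [h2]
    exact Set.Icc_union_Icc_eq_Icc (one_le_pow₀ one_le_two) (by gcongr <;> norm_num)

lemma aux_pow2_not_semi (m : ℕ) :
    ¬ (∃ x y z : ℕ, 0 < x ∧ 0 < y ∧ 0 < z ∧ x ^ 2 + y ^ 2 = z ^ 2 ∧ x + y + z = 2 * 2 ^ m) := by
  rintro ⟨x, y, z, hx, hy, hz, hpyth, hsum⟩
  have hsum' : x + y + z = 2 ^ (m + 1) := by rw [hsum, pow_succ]; ring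
  have key : 2 * ((y + z) * (x + z)) = (x + y + z) ^ 2 := by
    zify at hpyth ⊢
    linear_combination (-1 : ℤ) * hpyth
  rw [hsum'] at key
  have hsq : (2 ^ (m + 1) : ℕ) ^ 2 = 2 * 2 ^ (2 * m + 1) := by
    rw [← pow_mul, ← pow_succ']
    congr 1
    omega
  rw [hsq] at key
  have hprod : (y + z) * (x + z) = 2 ^ (2 * m + 1) := by omega
  obtain ⟨a, ha, hae⟩ := (Nat.dvd_prime_pow Nat.prime_two).mp
    (⟨x + z, hprod.symm⟩ : (y + z) ∣ 2 ^ (2 * m + 1))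
  obtain ⟨b, hb, hbe⟩ := (Nat.dvd_prime_pow Nat.prime_two).mp
    (⟨y + z, by rw [← hprod]; ring⟩ : (x + z) ∣ 2 ^ (2 * m + 1))
  rw [hae, hbe, ← pow_add] at hprod
  have hab : a + b = 2 * m + 1 := Nat.pow_right_injective (le_refl 2) hprod
  have ha' : y + z < 2 ^ (m + 1) := by omega
  have hb' : x + z < 2 ^ (m + 1) := by omega
  rw [hae] at ha'
  rw [hbe] at hb'
  have ham : a < m + 1 := (Nat.pow_lt_pow_iff_right (by norm_num)).mp ha'
  have hbm : b < m + 1 := (Nat.pow_lt_pow_iff_right (by norm_num)).mp hb'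
  omega

lemma aux_semi_construct {n D p : ℕ} (hn : 1 ≤ n) (hD : D ∣ n) (hp : p.Prime)
    (hpn : p ∣ n) (hodd : Odd p) (h1 : D < p) (h2 : p ≤ 2 * D) :
    ∃ x y z : ℕ, 0 < x ∧ 0 < y ∧ 0 < z ∧ x ^ 2 + y ^ 2 = z ^ 2 ∧ x + y + z = 2 * n := by
  have hD1 : 1 ≤ D := Nat.pos_of_dvd_of_pos hD (by omega)
  have hp2D : p ≠ 2 * D := by
    intro h
    obtain ⟨c, hc⟩ := hodd
    omega
  set t := p - D with ht
  have ht1 : 1 ≤ t := by omega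
  have htD : t < D := by omega
  have htsq : t ^ 2 < D ^ 2 := Nat.pow_lt_pow_left htD (by norm_num)
  have hcop : Nat.Coprime D p :=
    ((Nat.Prime.coprime_iff_not_dvd hp).mpr
      (fun hdvd => by have := Nat.le_of_dvd (by omega) hdvd; omega)).symm
  have hdvd : D * p ∣ n := hcop.mul_dvd_of_dvd_of_dvd hD hpn
  set k := n / (D * p) with hk
  have hkn : k * (D * p) = n := Nat.div_mul_cancel hdvd
  have hk1 : 1 ≤ k := Nat.div_pos (Nat.le_of_dvd (by omega) hdvd) (Nat.mul_pos (by omega) hp.pos)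
  set u := D ^ 2 - t ^ 2 with hu'
  have hu : u + t ^ 2 = D ^ 2 := Nat.sub_add_cancel (le_of_lt htsq)
  refine ⟨k * u, k * (2 * D * t), k * (D ^ 2 + t ^ 2), ?_, ?_, ?_, ?_, ?_⟩
  · have : 0 < u := by omega
    positivity
  · positivity
  · positivity
  · have base : u ^ 2 + (2 * D * t) ^ 2 = (D ^ 2 + t ^ 2) ^ 2 := by
      have h3 : (2 * D * t) ^ 2 = 4 * (u + t ^ 2) * t ^ 2 := by rw [hu]; ring
      have h4 : D ^ 2 + t ^ 2 = u + t ^ 2 + t ^ 2 := by omega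
      rw [h3, h4]; ring
    calc (k * u) ^ 2 + (k * (2 * D * t)) ^ 2
        = k ^ 2 * (u ^ 2 + (2 * D * t) ^ 2) := by ring
      _ = k ^ 2 * (D ^ 2 + t ^ 2) ^ 2 := by rw [base]
      _ = (k * (D ^ 2 + t ^ 2)) ^ 2 := by ring
  · have hDt : D + t = p := by omega
    calc k * u + k * (2 * D * t) + k * (D ^ 2 + t ^ 2)
        = k * ((u + t ^ 2) + (2 * D * t + D ^ 2)) := by ring
      _ = k * (D ^ 2 + (2 * D * t + D ^ 2)) := by rw [hu]
      _ = 2 * (k * (D * (D + t))) := by ring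
      _ = 2 * (k * (D * p)) := by rw [hDt]
      _ = 2 * n := by rw [hkn]

lemma aux_gap {n p : ℕ} (hn : 1 ≤ n) (hpn : p ∣ n) (hp1 : 1 < p)
    (hS : IsPreconnected (⋃ d ∈ n.divisors, Set.Icc (d : ℝ) (2 * d))) :
    ∃ D : ℕ, D ∣ n ∧ D < p ∧ p ≤ 2 * D := by
  set S := ⋃ d ∈ n.divisors, Set.Icc (d : ℝ) (2 * d) with hSdef
  have hn0 : n ≠ 0 := by omega
  set A := n.divisors.filter (fun d => d < p) with hA
  set B := n.divisors.filter (fun d => p ≤ d) with hB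
  have hAne : A.Nonempty := ⟨1, by simp [hA, Nat.mem_divisors, hn0, hp1, Nat.one_dvd]⟩
  have hBne : B.Nonempty := ⟨p, by simp [hB, Nat.mem_divisors, hn0, hpn]⟩
  set D := A.max' hAne with hDdef
  set D' := B.min' hBne with hD'def
  have hDA : D ∈ A := A.max'_mem hAne
  have hD'B : D' ∈ B := B.min'_mem hBne
  rw [hA, Finset.mem_filter, Nat.mem_divisors] at hDA
  rw [hB, Finset.mem_filter, Nat.mem_divisors] at hD'B
  refine ⟨D, hDA.1.1, hDA.2, ?_⟩
  by_contra hcon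
  push_neg at hcon
  -- so 2 * D < p ≤ D'
  have hD1 : 1 ≤ D := Nat.pos_of_dvd_of_pos hDA.1.1 (by omega)
  set c : ℝ := 2 * (D : ℝ) + 1 / 2 with hc
  -- every element of S is < c or > c
  have hsub : S ⊆ Set.Iio c ∪ Set.Ioi c := by
    intro x hx
    rw [hSdef] at hx
    simp only [Set.mem_iUnion, Set.mem_Icc, exists_prop] at hx
    obtain ⟨e, he, hex, hxe⟩ := hx
    rw [Nat.mem_divisors] at he
    rcases Nat.lt_or_ge e p with hep | hep
    · -- e ∈ A, so e ≤ D
      have heD : e ≤ D := Finset.le_max' A e (by simp [hA, Nat.mem_divisors, he.1, hn0, hep])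
      left
      have : (e : ℝ) ≤ D := by exact_mod_cast heD
      simp only [Set.mem_Iio, hc]
      linarith
    · -- e ∈ B, so e ≥ D'
      have heD' : D' ≤ e := Finset.min'_le B e (by simp [hB, Nat.mem_divisors, he.1, hn0, hep])
      right
      have h1 : p ≤ e := hep
      have h2 : 2 * D + 1 ≤ e := by omega
      have : (2 * D + 1 : ℝ) ≤ e := by exact_mod_cast h2
      simp only [Set.mem_Ioi, hc]
      push_cast at this ⊢
      linarith
  have hDS : (D : ℝ) ∈ S ∩ Set.Iio c := by
    constructor
    · rw [hSdef]
      simp only [Set.mem_iUnion, Set.mem_Icc, exists_prop]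
      exact ⟨D, Nat.mem_divisors.mpr ⟨hDA.1.1, hn0⟩, le_refl _, by
        have : (1:ℝ) ≤ D := by exact_mod_cast hD1
        linarith⟩
    · simp only [Set.mem_Iio, hc]
      have : (1:ℝ) ≤ D := by exact_mod_cast hD1
      linarith
  have hD'S : (D' : ℝ) ∈ S ∩ Set.Ioi c := by
    constructor
    · rw [hSdef]
      simp only [Set.mem_iUnion, Set.mem_Icc, exists_prop]
      have hD'1 : 1 ≤ D' := Nat.pos_of_dvd_of_pos hD'B.1.1 (by omega)
      exact ⟨D', Nat.mem_divisors.mpr ⟨hD'B.1.1, hn0⟩, le_refl _, by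
        have : (1:ℝ) ≤ D' := by exact_mod_cast hD'1
        linarith⟩
    · simp only [Set.mem_Ioi, hc]
      have h2 : 2 * D + 1 ≤ D' := by omega
      have : (2 * D + 1 : ℝ) ≤ D' := by exact_mod_cast h2
      push_cast at this
      linarith
  obtain ⟨w, -, hw1, hw2⟩ := hS (Set.Iio c) (Set.Ioi c) isOpen_Iio isOpen_Ioi hsub
    ⟨D, hDS.1, hDS.2⟩ ⟨D', hD'S.1, hD'S.2⟩
  exact absurd (hw1.trans hw2) (lt_irrefl w)

/-- `n` is a power of 2 iff `n` is 2-densely divisible (i.e. `blocks₂(n) = 1`)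
and `n` is not the semi-perimeter of a Pythagorean triangle. -/
theorem pow_two_iff_densely_divisible_and_not_semiperimeter (n : ℕ) (hn : 1 ≤ n) :
    (∃ m : ℕ, n = 2 ^ m) ↔ blocksCount 2 n = 1 ∧ ¬ IsPythSemiPerimeter n := by
  constructor
  · rintro ⟨m, rfl⟩
    constructor
    · unfold blocksCount
      rw [aux_pow2_union m]
      exact aux_card_one_of_connected
        ⟨Set.nonempty_Icc.mpr (one_le_pow₀ one_le_two), isPreconnected_Icc⟩
    · exact aux_pow2_not_semi m
  · rintro ⟨hb, hns⟩
    by_contra h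
    obtain ⟨p, hp, hodd, hpn⟩ := aux_exists_odd_prime hn h
    unfold blocksCount at hb
    have hS := aux_preconnected_of_card_one hb
    obtain ⟨D, hD, h1, h2⟩ := aux_gap hn hpn hp.one_lt hS
    exact hns (aux_semi_construct hn hD hp hpn hodd h1 h2)
end

section
/- For every real number λ > 1 and every integer n ≥ 1, the word ⟨⟨n⟩⟩_λ is a symmetric Dyck word, i.e. ⟨⟨n⟩⟩_λ is a Dyck word and its mirror image equals σ(⟨⟨n⟩⟩_λ), where σ is the letter-swapping morphism a ↦ b, b ↦ a. -/
open scoped Classical symmDiff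

private lemma le_getLast_of_sorted : ∀ (T : List ℝ), T.Pairwise (· ≤ ·) →
    ∀ (h : T ≠ []) (x : ℝ), x ∈ T → x ≤ T.getLast h := by
  intro T
  induction T with
  | nil => simp
  | cons a T ih =>
    intro hs h x hx
    have hpair := List.pairwise_cons.1 hs
    rcases List.mem_cons.1 hx with rfl | hx'
    · rcases eq_or_ne T [] with rfl | hT
      · simp
      · rw [List.getLast_cons hT]
        exact hpair.1 _ (List.getLast_mem hT)
    · have hT : T ≠ [] := List.ne_nil_of_mem hx'
      rw [List.getLast_cons hT]
      exact ih hpair.2 hT x hx'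

private lemma take_eq_filter_of_sorted (L : List ℝ) (hs : L.Pairwise (· < ·)) (i : ℕ)
    (h0 : 0 < i) (hi : i ≤ L.length) :
    ∃ t ∈ L, L.take i = L.filter (fun x => decide (x ≤ t)) := by
  have hTne : L.take i ≠ [] := by
    have : (L.take i).length = i := by
      rw [List.length_take]; omega
    intro hc; rw [hc] at this; simp at this; omega
  refine ⟨(L.take i).getLast hTne, ?_, ?_⟩
  · exact List.mem_of_mem_take (List.getLast_mem hTne)
  · set t := (L.take i).getLast hTne with ht
    have hTle : ∀ x ∈ L.take i, x ≤ t :=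
      le_getLast_of_sorted _ (List.Pairwise.sublist (List.take_sublist i L) (hs.imp le_of_lt)) hTne
    have hDgt : ∀ y ∈ L.drop i, t < y := fun y hy =>
      hs.rel_of_mem_take_of_mem_drop (List.getLast_mem hTne) hy
    conv_rhs => rw [← List.take_append_drop i L]
    rw [List.filter_append]
    rw [List.filter_eq_self.2 (fun a ha => by simpa using hTle a ha),
      List.filter_eq_nil_iff.2 (fun a ha => by simpa using not_le.2 (hDgt a ha)),
      List.append_nil]

set_option maxHeartbeats 2000000 in
/-- `⟨⟨n⟩⟩_λ` is a symmetric Dyck word: it is a Dyck word and its reversal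
equals its image under the letter-swapping morphism `a ↦ b, b ↦ a`. -/
theorem krWord_isSymmetricDyck (l : ℝ) (hl : 1 < l) (n : ℕ) (hn : 1 ≤ n) :
    IsDyck (krWord l n) ∧ (krWord l n).reverse = (krWord l n).map (fun x => !x) := by
  classical
  have hl0 : (0:ℝ) < l := lt_trans one_pos hl
  have hn0 : (0:ℝ) < n := by exact_mod_cast hn
  set A := divisorsR n with hA
  set B := lamDivisorsR l n with hB
  set S := A ∆ B with hSdef
  set L := S.sort (· ≤ ·) with hLdef
  have hAe : A = n.divisors.image (fun d : ℕ => (d:ℝ)) := by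
    rw [hA]; ext x; simp [divisorsR]
  have hBe : B = n.divisors.image (fun d : ℕ => l*(d:ℝ)) := by
    rw [hB]; ext x; simp [lamDivisorsR]
  have hinjA : Function.Injective (fun d : ℕ => (d:ℝ)) := fun a b h => Nat.cast_injective h
  have hinjB : Function.Injective (fun d : ℕ => l * (d:ℝ)) :=
    fun a b h => Nat.cast_injective (mul_left_cancel₀ (ne_of_gt hl0) h)
  have hmemA : ∀ x, x ∈ A ↔ ∃ d : ℕ, d ∈ n.divisors ∧ (d:ℝ) = x := by
    intro x; rw [hAe]; simp
  have hmemB : ∀ x, x ∈ B ↔ ∃ d : ℕ, d ∈ n.divisors ∧ l*(d:ℝ) = x := by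
    intro x; rw [hBe]; simp
  have hApos : ∀ x ∈ A, 0 < x := by
    intro x hx; obtain ⟨d, hd, rfl⟩ := (hmemA x).1 hx
    exact_mod_cast Nat.pos_of_mem_divisors hd
  have hBpos : ∀ x ∈ B, 0 < x := by
    intro x hx; obtain ⟨d, hd, rfl⟩ := (hmemB x).1 hx
    have hd0 : (0:ℝ) < d := by exact_mod_cast Nat.pos_of_mem_divisors hd
    positivity
  have hSmem : ∀ x, x ∈ S ↔ (x ∈ A ∧ x ∉ B) ∨ (x ∈ B ∧ x ∉ A) := fun x => Finset.mem_symmDiff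
  have hSpos : ∀ x ∈ S, 0 < x := by
    intro x hx; rcases (hSmem x).1 hx with ⟨h,_⟩|⟨h,_⟩
    exacts [hApos x h, hBpos x h]
  -- cardinalities
  have hABcard : B.card = A.card := by
    rw [hAe, hBe, Finset.card_image_of_injective _ hinjB, Finset.card_image_of_injective _ hinjA]
  have hfilter_le : ∀ t : ℝ, (B.filter (· ≤ t)).card ≤ (A.filter (· ≤ t)).card := by
    intro t
    have h1 : B.filter (· ≤ t)
        = (n.divisors.filter (fun d : ℕ => l*(d:ℝ) ≤ t)).image (fun d : ℕ => l*(d:ℝ)) := by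
      rw [hBe]; ext x
      simp only [Finset.mem_filter, Finset.mem_image]
      constructor
      · rintro ⟨⟨d, hd, rfl⟩, hx⟩; exact ⟨d, ⟨hd, hx⟩, rfl⟩
      · rintro ⟨d, ⟨hd, hx⟩, rfl⟩; exact ⟨⟨d, hd, rfl⟩, hx⟩
    have h2 : A.filter (· ≤ t)
        = (n.divisors.filter (fun d : ℕ => (d:ℝ) ≤ t)).image (fun d : ℕ => (d:ℝ)) := by
      rw [hAe]; ext x
      simp only [Finset.mem_filter, Finset.mem_image]
      constructor
      · rintro ⟨⟨d, hd, rfl⟩, hx⟩; exact ⟨d, ⟨hd, hx⟩, rfl⟩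
      · rintro ⟨d, ⟨hd, hx⟩, rfl⟩; exact ⟨⟨d, hd, rfl⟩, hx⟩
    rw [h1, h2, Finset.card_image_of_injective _ hinjB, Finset.card_image_of_injective _ hinjA]
    apply Finset.card_le_card
    apply Finset.monotone_filter_right
    intro d _ hd
    exact le_trans (le_mul_of_one_le_left (Nat.cast_nonneg d) hl.le) hd
  -- splitting counts
  have hsplit : ∀ (C D : Finset ℝ) (p : ℝ → Prop),
      (C.filter p).card = ((C \ D).filter p).card + ((C ∩ D).filter p).card := by
    intro C D p
    rw [← Finset.card_union_of_disjoint
        (Finset.disjoint_filter_filter (Finset.disjoint_sdiff_inter C D)),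
      ← Finset.filter_union, Finset.sdiff_union_inter]
  have hBAle : ∀ t : ℝ, ((B \ A).filter (· ≤ t)).card ≤ ((A \ B).filter (· ≤ t)).card := by
    intro t
    have h1 := hsplit B A (· ≤ t)
    have h2 := hsplit A B (· ≤ t)
    rw [Finset.inter_comm] at h1
    have h3 := hfilter_le t
    omega
  have hBAeq : (B \ A).card = (A \ B).card := by
    have h1 : B.card = (B \ A).card + (B ∩ A).card := by
      rw [← Finset.card_union_of_disjoint (Finset.disjoint_sdiff_inter B A),
        Finset.sdiff_union_inter]
    have h2 : A.card = (A \ B).card + (A ∩ B).card := by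
      rw [← Finset.card_union_of_disjoint (Finset.disjoint_sdiff_inter A B),
        Finset.sdiff_union_inter]
    rw [Finset.inter_comm] at h1
    omega
  -- S-level filters
  have hSA : ∀ p : ℝ → Prop, S.filter (fun x => x ∈ A ∧ p x) = (A \ B).filter p := by
    intro p; ext x
    simp only [Finset.mem_filter, Finset.mem_sdiff, hSmem]
    tauto
  have hSB : ∀ p : ℝ → Prop, S.filter (fun x => x ∉ A ∧ p x) = (B \ A).filter p := by
    intro p; ext x
    simp only [Finset.mem_filter, Finset.mem_sdiff, hSmem]
    tauto
  -- list-counting bridge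
  have hLsorted : L.Pairwise (· < ·) := (Finset.sortedLT_sort S).pairwise
  have hLcountP : ∀ p : ℝ → Bool, L.countP p = (S.filter (fun x => p x = true)).card := by
    intro p
    have h1 : (↑L : Multiset ℝ) = S.val := Finset.sort_eq S _
    have h2 : Multiset.countP (fun x => p x = true) (↑L : Multiset ℝ)
        = Multiset.countP (fun x => p x = true) S.val := by rw [h1]
    rw [Multiset.coe_countP] at h2
    have h3 : (L.countP fun a => decide (p a = true)) = L.countP p := by
      apply List.countP_congr
      intro x _
      cases h : p x <;> simp [h]
    rw [← h3, h2, Multiset.countP_eq_card_filter]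
    rfl
  have hLtake : ∀ (p : ℝ → Bool) (t : ℝ),
      (L.filter (fun x => decide (x ≤ t))).countP p
        = (S.filter (fun x => p x = true ∧ x ≤ t)).card := by
    intro p t
    rw [List.countP_filter, hLcountP]
    congr 1
    apply Finset.filter_congr
    intro x _
    simp
  have hword : krWord l n = L.map (fun x => decide (x ∈ A)) := rfl
  have hcount_true : ∀ M : List ℝ,
      (M.map (fun x => decide (x ∈ A))).count true = M.countP (fun x => decide (x ∈ A)) := by
    intro M
    induction M with
    | nil => rfl
    | cons a M ih => by_cases h : a ∈ A <;> simp [h, List.count_cons, ih]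
  have hcount_false : ∀ M : List ℝ,
      (M.map (fun x => decide (x ∈ A))).count false = M.countP (fun x => !decide (x ∈ A)) := by
    intro M
    induction M with
    | nil => rfl
    | cons a M ih => by_cases h : a ∈ A <;> simp [h, List.count_cons, ih]
  have htotal : (krWord l n).count true = (krWord l n).count false := by
    rw [hword, hcount_true, hcount_false, hLcountP, hLcountP]
    have e1 : S.filter (fun x => decide (x ∈ A) = true) = A \ B := by
      ext x; simp only [Finset.mem_filter, Finset.mem_sdiff, hSmem, decide_eq_true_eq]; tauto
    have e2 : S.filter (fun x => (!decide (x ∈ A)) = true) = B \ A := by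
      ext x
      simp only [Finset.mem_filter, Finset.mem_sdiff, hSmem, Bool.not_eq_true',
        decide_eq_false_iff_not]
      tauto
    rw [e1, e2, hBAeq]
  constructor
  · constructor
    · intro p hp
      have hpt : p = (krWord l n).take p.length := List.prefix_iff_eq_take.1 hp
      rw [hpt]
      set i := p.length with hidef
      rcases Nat.eq_zero_or_pos i with h0 | hi0
      · simp [h0]
      rcases le_or_gt L.length i with hlen | hlen
      · have : (krWord l n).take i = krWord l n := by
          apply List.take_of_length_le
          rw [hword, List.length_map]; exact hlen
        rw [this, htotal]
      · obtain ⟨t, htL, htake⟩ := take_eq_filter_of_sorted L hLsorted i hi0 hlen.le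
        have hmapTake : (krWord l n).take i = (L.take i).map (fun x => decide (x ∈ A)) := by
          rw [hword, List.map_take]
        rw [hmapTake, htake, hcount_true, hcount_false, hLtake, hLtake]
        have e1 : S.filter (fun x => decide (x ∈ A) = true ∧ x ≤ t)
            = S.filter (fun x => x ∈ A ∧ x ≤ t) := by
          apply Finset.filter_congr; intro x _; simp
        have e2 : S.filter (fun x => (!decide (x ∈ A)) = true ∧ x ≤ t)
            = S.filter (fun x => x ∉ A ∧ x ≤ t) := by
          apply Finset.filter_congr; intro x _; simp
        rw [e1, e2, hSA, hSB]
        exact hBAle t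
    · exact htotal
  · -- symmetry
    set f : ℝ → ℝ := fun x => l * n / x with hf
    have hlnpos : (0:ℝ) < l * n := by positivity
    have hfA : ∀ x ∈ A, f x ∈ B := by
      intro x hx
      obtain ⟨d, hd, rfl⟩ := (hmemA x).1 hx
      obtain ⟨hdvd, -⟩ := Nat.mem_divisors.1 hd
      have hd0 : d ≠ 0 := Nat.pos_of_mem_divisors hd |>.ne'
      refine (hmemB _).2 ⟨n / d, ?_, ?_⟩
      · exact Nat.mem_divisors.2 ⟨Nat.div_dvd_of_dvd hdvd, by omega⟩
      · rw [Nat.cast_div hdvd (Nat.cast_ne_zero.2 hd0)]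
        show l * ((n:ℝ)/(d:ℝ)) = l * (n:ℝ) / (d:ℝ)
        rw [mul_div_assoc]
    have hfB : ∀ x ∈ B, f x ∈ A := by
      intro x hx
      obtain ⟨d, hd, rfl⟩ := (hmemB x).1 hx
      obtain ⟨hdvd, -⟩ := Nat.mem_divisors.1 hd
      have hd0 : d ≠ 0 := Nat.pos_of_mem_divisors hd |>.ne'
      refine (hmemA _).2 ⟨n / d, ?_, ?_⟩
      · exact Nat.mem_divisors.2 ⟨Nat.div_dvd_of_dvd hdvd, by omega⟩
      · rw [Nat.cast_div hdvd (Nat.cast_ne_zero.2 hd0)]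
        show (n:ℝ)/(d:ℝ) = l * (n:ℝ) / (l * (d:ℝ))
        rw [mul_div_mul_left _ _ (ne_of_gt hl0)]
    have hff : ∀ x : ℝ, x ≠ 0 → f (f x) = x := by
      intro x hx
      rw [hf]
      field_simp
    have hfS : ∀ x ∈ S, f x ∈ S ∧ (f x ∈ A ↔ x ∉ A) := by
      intro x hx
      have hx0 : x ≠ 0 := ne_of_gt (hSpos x hx)
      rcases (hSmem x).1 hx with ⟨hxA, hxB⟩ | ⟨hxB, hxA⟩
      · have h1 : f x ∈ B := hfA x hxA
        have h2 : f x ∉ A := by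
          intro hc
          have h3 := hfA _ hc
          rw [hff x hx0] at h3
          exact hxB h3
        exact ⟨(hSmem _).2 (Or.inr ⟨h1, h2⟩), by simp [h2, hxA]⟩
      · have h1 : f x ∈ A := hfB x hxB
        have h2 : f x ∉ B := by
          intro hc
          have h3 := hfB _ hc
          rw [hff x hx0] at h3
          exact hxA h3
        exact ⟨(hSmem _).2 (Or.inl ⟨h1, h2⟩), by simp [h1, hxA]⟩
    have hinjS : Set.InjOn f ↑S := by
      intro x hx y hy hxy
      have h1 := congrArg f hxy
      rwa [hff x (ne_of_gt (hSpos x hx)), hff y (ne_of_gt (hSpos y hy))] at h1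
    have himg : S.image f = S := by
      apply Finset.eq_of_subset_of_card_le
      · intro y hy
        obtain ⟨x, hx, rfl⟩ := Finset.mem_image.1 hy
        exact (hfS x hx).1
      · rw [Finset.card_image_of_injOn hinjS]
    have hperm : List.Perm (L.map f) L := by
      apply Multiset.coe_eq_coe.1
      have h1 : (↑(L.map f) : Multiset ℝ) = Multiset.map f ↑L := rfl
      rw [h1, hLdef, Finset.sort_eq, ← Finset.image_val_of_injOn hinjS, himg]
    have hsrev : ((L.map f).reverse).Pairwise (· < ·) := by
      rw [List.pairwise_reverse, List.pairwise_map]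
      apply List.Pairwise.imp_of_mem (l := L) ?_ hLsorted
      intro a b ha hb hab
      exact div_lt_div_of_pos_left hlnpos (hSpos a ((Finset.mem_sort _).1 ha)) hab
    haveI : Std.Antisymm (α := ℝ) (· < ·) := ⟨fun a b h1 h2 => absurd h1 (asymm h2)⟩
    have hrev : (L.map f).reverse = L :=
      List.Perm.eq_of_pairwise' hsrev hLsorted ((List.reverse_perm _).trans hperm)
    have hrevL : L.reverse = L.map f := by conv_lhs => rw [← hrev, List.reverse_reverse]
    rw [hword, ← List.map_reverse, hrevL, List.map_map, List.map_map]
    apply List.map_congr_left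
    intro x hx
    have hxS : x ∈ S := (Finset.mem_sort _).1 hx
    have hiff := (hfS x hxS).2
    simp only [Function.comp]
    rw [show (decide (f x ∈ A)) = decide (¬ (x ∈ A)) from decide_eq_decide.2 hiff, decide_not]
end

section
/- For every real number λ > 1 and every integer n ≥ 1, the number of centered tunnels of the word ⟨⟨n⟩⟩_λ equals middle_λ(n), the number of λ-middle divisors of n. -/
open scoped Classical symmDiff

namespace KRProof

noncomputable def T (w : List Bool) (j : ℕ) : ℤ :=
  ((w.take j).count true : ℤ) - ((w.take j).count false : ℤ)

lemma T_zero (w : List Bool) : T w 0 = 0 := by simp [T]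

lemma count_take_succ (w : List Bool) (b : Bool) (i : ℕ) (h : i < w.length) :
    (w.take (i+1)).count b = (w.take i).count b + if w[i] = b then 1 else 0 := by
  rw [List.take_succ, List.count_append]
  congr 1
  rw [List.getElem?_eq_getElem h]
  cases b <;> cases hb : w[i] <;> simp [hb]

lemma T_succ (w : List Bool) (i : ℕ) (h : i < w.length) :
    T w (i+1) = T w i + (if w.getD i false = true then 1 else -1) := by
  rw [List.getD_eq_getElem _ _ h]
  cases hb : w[i] <;>
    simp [T, count_take_succ w true i h, count_take_succ w false i h, hb] <;> ring

lemma T_succ_le (w : List Bool) (i : ℕ) : T w (i+1) ≤ T w i + 1 := by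
  by_cases h : i < w.length
  · rw [T_succ w i h]; split <;> omega
  · have : w.take (i+1) = w.take i := by
      rw [List.take_of_length_le (by omega), List.take_of_length_le (by omega)]
    simp only [T, this]; omega

lemma T_le_succ (w : List Bool) (i : ℕ) : T w i ≤ T w (i+1) + 1 := by
  by_cases h : i < w.length
  · rw [T_succ w i h]; split <;> omega
  · have : w.take (i+1) = w.take i := by
      rw [List.take_of_length_le (by omega), List.take_of_length_le (by omega)]
    simp only [T, this]; omega

lemma count_slice (w : List Bool) (b : Bool) (a s : ℕ) :
    (((w.drop a).take s).count b : ℤ) = ((w.take (a+s)).count b : ℤ) - ((w.take a).count b : ℤ) := by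
  rw [List.take_add, List.count_append]; push_cast; ring

lemma isDyck_slice_iff (w : List Bool) (a c : ℕ) (hac : a ≤ c) (hc : c ≤ w.length) :
    IsDyck ((w.drop a).take (c - a)) ↔
      ((∀ j, a ≤ j → j ≤ c → T w a ≤ T w j) ∧ T w c = T w a) := by
  have hlen : ((w.drop a).take (c - a)).length = c - a := by
    rw [List.length_take, List.length_drop]; omega
  constructor
  · rintro ⟨h1, h2⟩
    constructor
    · intro j hj1 hj2
      have hpre : (w.drop a).take (j - a) <+: (w.drop a).take (c - a) := by
        rw [show (w.drop a).take (j-a) = ((w.drop a).take (c-a)).take (j-a) by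
          rw [List.take_take]; congr 1; omega]
        exact List.take_prefix _ _
      have := h1 _ hpre
      have e1 := count_slice w true a (j - a)
      have e2 := count_slice w false a (j - a)
      rw [show a + (j - a) = j by omega] at e1 e2
      simp only [T] at *
      omega
    · have e1 := count_slice w true a (c - a)
      have e2 := count_slice w false a (c - a)
      rw [show a + (c - a) = c by omega] at e1 e2
      simp only [T] at *
      omega
  · rintro ⟨h1, h2⟩
    constructor
    · intro p hp
      have hple : p.length ≤ c - a := by
        have := hp.length_le; omega
      rw [List.prefix_iff_eq_take.mp hp, List.take_take,
        show p.length ⊓ (c - a) = p.length by omega]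
      have e1 := count_slice w true a p.length
      have e2 := count_slice w false a p.length
      have := h1 (a + p.length) (by omega) (by omega)
      simp only [T] at *
      omega
    · have e1 := count_slice w true a (c - a)
      have e2 := count_slice w false a (c - a)
      rw [show a + (c - a) = c by omega] at e1 e2
      simp only [T] at *
      omega

end KRProof

namespace KRProof

lemma bool_not_inj : Function.Injective (fun b : Bool => !b) := by
  intro a b h; cases a <;> cases b <;> simp_all

section Main

variable (w : List Bool) (m : ℕ)

noncomputable def gmin (w : List Bool) (m : ℕ) (k : ℕ) : ℤ :=
  if h : k ≤ m then (Finset.Icc k m).inf' (Finset.nonempty_Icc.mpr h) (T w) else 0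

lemma gmin_le {k j : ℕ} (h1 : k ≤ j) (h2 : j ≤ m) : gmin w m k ≤ T w j := by
  rw [gmin, dif_pos (le_trans h1 h2)]
  exact Finset.inf'_le _ (Finset.mem_Icc.mpr ⟨h1, h2⟩)

lemma le_gmin {k : ℕ} (hk : k ≤ m) {c : ℤ} (h : ∀ j, k ≤ j → j ≤ m → c ≤ T w j) :
    c ≤ gmin w m k := by
  rw [gmin, dif_pos hk]
  exact Finset.le_inf' _ _ (fun j hj => h j (Finset.mem_Icc.mp hj).1 (Finset.mem_Icc.mp hj).2)

lemma gmin_last : gmin w m m = T w m := by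
  rw [gmin, dif_pos le_rfl]
  simp

lemma gmin_step {k : ℕ} (hk : k < m) : gmin w m k = min (T w k) (gmin w m (k+1)) := by
  rw [gmin, dif_pos hk.le, gmin, dif_pos (show k+1 ≤ m from hk)]
  have : Finset.Icc k m = insert k (Finset.Icc (k+1) m) := by
    ext x; simp only [Finset.mem_Icc, Finset.mem_insert]; omega
  rw [show ((Finset.Icc k m).inf' (Finset.nonempty_Icc.mpr hk.le) (T w)) =
    ((insert k (Finset.Icc (k+1) m)).inf'
      (by rw [← this]; exact Finset.nonempty_Icc.mpr hk.le) (T w)) by congr 1,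
    Finset.inf'_insert]

lemma card_filter_cond : ∀ d k, k + d = m →
    (((Finset.Ico k m).filter (fun i => T w i < gmin w m (i+1))).card : ℤ)
      = T w m - gmin w m k := by
  intro d
  induction d with
  | zero =>
    intro k hk
    have : k = m := by omega
    subst this
    simp [gmin_last]
  | succ d ih =>
    intro k hk
    have hklt : k < m := by omega
    have hIco : Finset.Ico k m = insert k (Finset.Ico (k+1) m) := by
      ext x; simp only [Finset.mem_Ico, Finset.mem_insert]; omega
    have hknot : k ∉ (Finset.Ico (k+1) m).filter (fun i => T w i < gmin w m (i+1)) := by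
      simp [Finset.mem_filter]
    have hg1 : gmin w m (k+1) ≤ T w (k+1) := gmin_le w m le_rfl (by omega)
    have hg2 : T w (k+1) ≤ T w k + 1 := T_succ_le w k
    rw [hIco, Finset.filter_insert]
    by_cases hc : T w k < gmin w m (k+1)
    · rw [if_pos hc, Finset.card_insert_of_notMem hknot]
      have : gmin w m k = T w k := by
        rw [gmin_step w m hklt]
        omega
      push_cast
      rw [ih (k+1) (by omega), this]
      omega
    · rw [if_neg hc]
      have : gmin w m k = gmin w m (k+1) := by
        rw [gmin_step w m hklt]
        omega
      rw [ih (k+1) (by omega), this]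

lemma ct_eq_T (hlen : w.length = 2 * m)
    (hsym : ∀ i, i < 2*m → w.getD (2*m - 1 - i) false = !(w.getD i false))
    (hpos : ∀ j, 0 ≤ T w j) :
    (ct w : ℤ) = T w m := by
  -- the word balances at 2m
  have hrev : w.reverse = w.map (fun b => !b) := by
    apply List.ext_getElem (by simp)
    intro i h1 h2
    rw [List.getElem_reverse, List.getElem_map]
    have hi : i < 2 * m := by rw [← hlen]; simpa using h2
    have := hsym i hi
    rw [List.getD_eq_getElem _ _ (by omega : 2*m - 1 - i < w.length),
        List.getD_eq_getElem _ _ (by omega : i < w.length)] at this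
    simp only [hlen]
    exact this
  have htake_all : w.take (2*m) = w := by
    rw [← hlen]; exact List.take_length
  have hbal : T w (2*m) = 0 := by
    have : w.count true = w.count false := by
      conv_lhs => rw [← List.count_reverse, hrev]
      rw [show (true : Bool) = !false by rfl, List.count_map_of_injective _ _ bool_not_inj]
    simp [T, htake_all, this]
  -- symmetry of heights
  have hsymT : ∀ j, j ≤ 2*m → T w (2*m - j) = T w j := by
    intro j hj
    have hdrop : ∀ b : Bool, (w.drop (2*m - j)).count b = (w.take j).count (!b) := by
      intro b
      rw [← List.count_reverse, List.reverse_drop, hlen,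
        show 2*m - (2*m - j) = j by omega, hrev, ← List.map_take,
        show b = !(!b) by simp, List.count_map_of_injective _ _ bool_not_inj]
      simp
    have hsplit : ∀ b : Bool, (w.take (2*m - j)).count b + (w.drop (2*m - j)).count b
        = w.count b := by
      intro b
      rw [← List.count_append, List.take_append_drop]
    have e1 := hsplit true; have e2 := hsplit false
    rw [hdrop true] at e1; rw [hdrop false] at e2
    have hb : w.count true = w.count false := by
      have := hbal; simp only [T, htake_all] at this; omega
    simp only [T]
    simp only [Bool.not_true, Bool.not_false] at e1 e2
    omega
  -- rewrite ct as a filter over the simpler condition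
  have hm2 : (2*m)/2 = m := by omega
  have hct : ct w = ((Finset.range m).filter (fun i => T w i < gmin w m (i+1))).card := by
    rw [ct, hlen, hm2]
    congr 1
    apply Finset.filter_congr
    intro i hi
    have him : i < m := Finset.mem_range.mp hi
    have hi2m : i < 2*m := by omega
    have h2mi : 2*m - 1 - i < w.length := by omega
    have hiw : i < w.length := by omega
    -- second condition is equivalent to first
    have hsnd : w.getD (2*m-1-i) true = w.getD (2*m-1-i) false := by
      rw [List.getD_eq_getElem _ _ h2mi, List.getD_eq_getElem _ _ h2mi]
    have hflip := hsym i hi2m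
    -- Dyck condition
    have ha : i + 1 ≤ m := him
    have hinner : (2*m : ℕ) - 2*(i+1) = (2*m - (i+1)) - (i+1) := by omega
    have hdyck := isDyck_slice_iff w (i+1) (2*m - (i+1)) (by omega) (by omega)
    have hTc : T w (2*m - (i+1)) = T w (i+1) := hsymT (i+1) (by omega)
    constructor
    · rintro ⟨h1, h2, h3⟩
      rw [hinner] at h3
      obtain ⟨h4, -⟩ := hdyck.mp h3
      have h5 : T w (i+1) ≤ gmin w m (i+1) :=
        le_gmin w m (by omega) (fun j hj1 hj2 => h4 j hj1 (by omega))
      have h6 : T w (i+1) = T w i + 1 := by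
        rw [T_succ w i hiw, if_pos h1]
      omega
    · intro hc
      have hg1 : gmin w m (i+1) ≤ T w (i+1) := gmin_le w m le_rfl (by omega)
      have hg2 : T w (i+1) ≤ T w i + 1 := T_succ_le w i
      have h6 : T w (i+1) = T w i + 1 := by
        by_contra hne
        rw [T_succ w i hiw] at hne hg1 hg2
        rcases (em (w.getD i false = true)) with h | h
        · rw [if_pos h] at hne; exact hne rfl
        · rw [if_neg h] at hg1; omega
      have h1 : w.getD i false = true := by
        by_contra h
        rw [T_succ w i hiw, if_neg h] at h6; omega
      refine ⟨h1, ?_, ?_⟩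
      · rw [hsnd, hflip, h1]; rfl
      · rw [hinner]
        apply hdyck.mpr
        refine ⟨?_, hTc⟩
        intro j hj1 hj2
        have hTi1 : T w (i+1) ≤ gmin w m (i+1) := by omega
        by_cases hjm : j ≤ m
        · exact le_trans hTi1 (gmin_le w m hj1 hjm)
        · have hj' : T w j = T w (2*m - j) := by
            have := hsymT (2*m - j) (by omega)
            rw [show 2*m - (2*m - j) = j by omega] at this
            exact this
          rw [hj']
          exact le_trans hTi1 (gmin_le w m (by omega) (by omega))
  -- final count
  have h0 : gmin w m 0 = 0 := by
    have h1 : gmin w m 0 ≤ T w 0 := gmin_le w m (Nat.zero_le _) (Nat.zero_le _)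
    have h2 : (0:ℤ) ≤ gmin w m 0 := le_gmin w m (Nat.zero_le _) (fun j _ _ => hpos j)
    rw [T_zero] at h1
    omega
  rw [hct, Finset.range_eq_Ico, card_filter_cond w m m 0 (by omega), h0]
  ring

end Main

end KRProof





namespace KRProof

variable {l : ℝ} {n : ℕ}

noncomputable def sig (l : ℝ) (n : ℕ) (x : ℝ) : ℝ := l * n / x

lemma npos (hn : 1 ≤ n) : (0:ℝ) < n := by
  exact_mod_cast Nat.pos_of_ne_zero (by omega)

lemma lnpos (hl : 1 < l) (hn : 1 ≤ n) : (0:ℝ) < l * n :=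
  mul_pos (by linarith) (npos hn)

lemma mem_D_iff {x : ℝ} : x ∈ divisorsR n ↔ ∃ d ∈ n.divisors, (d:ℝ) = x := by
  simp [divisorsR]

lemma mem_E_iff {x : ℝ} : x ∈ lamDivisorsR l n ↔ ∃ d ∈ n.divisors, l * (d:ℝ) = x := by
  simp [lamDivisorsR]

lemma one_le_of_mem_D {x : ℝ} (hx : x ∈ divisorsR n) : 1 ≤ x := by
  obtain ⟨d, hd, rfl⟩ := mem_D_iff.mp hx
  exact_mod_cast Nat.pos_of_mem_divisors hd

lemma le_n_of_mem_D (hn : 1 ≤ n) {x : ℝ} (hx : x ∈ divisorsR n) : x ≤ n := by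
  obtain ⟨d, hd, rfl⟩ := mem_D_iff.mp hx
  exact_mod_cast Nat.le_of_dvd (by omega) (Nat.mem_divisors.mp hd).1

lemma pos_of_mem_E {x : ℝ} (hl : 1 < l) (hx : x ∈ lamDivisorsR l n) : 0 < x := by
  obtain ⟨d, hd, rfl⟩ := mem_E_iff.mp hx
  have : (0:ℝ) < d := by exact_mod_cast Nat.pos_of_mem_divisors hd
  positivity

lemma mem_S_cases {x : ℝ} :
    x ∈ divisorsR n ∆ lamDivisorsR l n ↔
      (x ∈ divisorsR n \ lamDivisorsR l n ∨ x ∈ lamDivisorsR l n \ divisorsR n) := by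
  rw [Finset.mem_symmDiff]
  simp [Finset.mem_sdiff]

lemma pos_of_mem_S {x : ℝ} (hl : 1 < l)
    (hx : x ∈ divisorsR n ∆ lamDivisorsR l n) : 0 < x := by
  rcases mem_S_cases.mp hx with h | h
  · have := one_le_of_mem_D (Finset.mem_sdiff.mp h).1; linarith
  · exact pos_of_mem_E hl (Finset.mem_sdiff.mp h).1

lemma key1 (hl : 1 < l) (hn : 1 ≤ n) {x : ℝ}
    (hx : x ∈ divisorsR n \ lamDivisorsR l n) :
    sig l n x ∈ lamDivisorsR l n \ divisorsR n := by
  obtain ⟨hxD, hxE⟩ := Finset.mem_sdiff.mp hx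
  obtain ⟨d, hd, rfl⟩ := mem_D_iff.mp hxD
  obtain ⟨hdvd, hn0⟩ := Nat.mem_divisors.mp hd
  have hd0 : (0:ℝ) < d := by exact_mod_cast Nat.pos_of_mem_divisors hd
  have hcast : ((n / d : ℕ) : ℝ) = (n:ℝ) / d := Nat.cast_div hdvd (ne_of_gt hd0)
  refine Finset.mem_sdiff.mpr ⟨?_, ?_⟩
  · refine mem_E_iff.mpr ⟨n / d, Nat.mem_divisors.mpr ⟨Nat.div_dvd_of_dvd hdvd, hn0⟩, ?_⟩
    rw [hcast, sig]
    ring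
  · intro hmem
    obtain ⟨e, he, heq⟩ := mem_D_iff.mp hmem
    obtain ⟨hedvd, -⟩ := Nat.mem_divisors.mp he
    have he0 : (0:ℝ) < e := by exact_mod_cast Nat.pos_of_mem_divisors he
    apply hxE
    refine mem_E_iff.mpr ⟨n / e, Nat.mem_divisors.mpr ⟨Nat.div_dvd_of_dvd hedvd, hn0⟩, ?_⟩
    have hecast : ((n / e : ℕ) : ℝ) = (n:ℝ) / e := Nat.cast_div hedvd (ne_of_gt he0)
    rw [hecast]
    rw [sig] at heq
    field_simp at heq ⊢
    linarith [heq]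

lemma key2 (hl : 1 < l) (hn : 1 ≤ n) {x : ℝ}
    (hx : x ∈ lamDivisorsR l n \ divisorsR n) :
    sig l n x ∈ divisorsR n \ lamDivisorsR l n := by
  obtain ⟨hxE, hxD⟩ := Finset.mem_sdiff.mp hx
  obtain ⟨d, hd, rfl⟩ := mem_E_iff.mp hxE
  obtain ⟨hdvd, hn0⟩ := Nat.mem_divisors.mp hd
  have hd0 : (0:ℝ) < d := by exact_mod_cast Nat.pos_of_mem_divisors hd
  have hl0 : (0:ℝ) < l := by linarith
  have hcast : ((n / d : ℕ) : ℝ) = (n:ℝ) / d := Nat.cast_div hdvd (ne_of_gt hd0)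
  refine Finset.mem_sdiff.mpr ⟨?_, ?_⟩
  · refine mem_D_iff.mpr ⟨n / d, Nat.mem_divisors.mpr ⟨Nat.div_dvd_of_dvd hdvd, hn0⟩, ?_⟩
    rw [hcast, sig]
    field_simp
  · intro hmem
    obtain ⟨e, he, heq⟩ := mem_E_iff.mp hmem
    obtain ⟨hedvd, -⟩ := Nat.mem_divisors.mp he
    have he0 : (0:ℝ) < e := by exact_mod_cast Nat.pos_of_mem_divisors he
    apply hxD
    refine mem_D_iff.mpr ⟨n / e, Nat.mem_divisors.mpr ⟨Nat.div_dvd_of_dvd hedvd, hn0⟩, ?_⟩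
    have hecast : ((n / e : ℕ) : ℝ) = (n:ℝ) / e := Nat.cast_div hedvd (ne_of_gt he0)
    rw [hecast]
    rw [sig] at heq
    field_simp at heq ⊢
    nlinarith [heq]

lemma sig_invol (hl : 1 < l) (hn : 1 ≤ n) {x : ℝ} (hx : 0 < x) :
    sig l n (sig l n x) = x := by
  have h1 : (0:ℝ) < l * n := lnpos hl hn
  rw [sig, sig]
  field_simp

lemma sig_mem_S (hl : 1 < l) (hn : 1 ≤ n) {x : ℝ}
    (hx : x ∈ divisorsR n ∆ lamDivisorsR l n) :
    sig l n x ∈ divisorsR n ∆ lamDivisorsR l n := by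
  rcases mem_S_cases.mp hx with h | h
  · exact mem_S_cases.mpr (Or.inr (key1 hl hn h))
  · exact mem_S_cases.mpr (Or.inl (key2 hl hn h))

lemma sig_flip (hl : 1 < l) (hn : 1 ≤ n) {x : ℝ}
    (hx : x ∈ divisorsR n ∆ lamDivisorsR l n) :
    (sig l n x ∈ divisorsR n ↔ x ∉ divisorsR n) := by
  rcases mem_S_cases.mp hx with h | h
  · have h1 := key1 hl hn h
    have h2 := (Finset.mem_sdiff.mp h1).2
    have h3 := (Finset.mem_sdiff.mp h).1
    simp [h2, h3]
  · have h1 := key2 hl hn h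
    have h2 := (Finset.mem_sdiff.mp h1).1
    have h3 := (Finset.mem_sdiff.mp h).2
    simp [h2, h3]

lemma image_sig (hl : 1 < l) (hn : 1 ≤ n) :
    (divisorsR n ∆ lamDivisorsR l n).image (sig l n) = divisorsR n ∆ lamDivisorsR l n := by
  apply Finset.Subset.antisymm
  · intro y hy
    obtain ⟨x, hx, rfl⟩ := Finset.mem_image.mp hy
    exact sig_mem_S hl hn hx
  · intro x hx
    exact Finset.mem_image.mpr ⟨sig l n x, sig_mem_S hl hn hx,
      sig_invol hl hn (pos_of_mem_S hl hx)⟩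


lemma sig_injOn (hl : 1 < l) (hn : 1 ≤ n) :
    Set.InjOn (sig l n) ↑(divisorsR n ∆ lamDivisorsR l n) := by
  intro a ha b hb h
  have ha' : 0 < a := pos_of_mem_S hl (by exact_mod_cast ha)
  have hb' : 0 < b := pos_of_mem_S hl (by exact_mod_cast hb)
  have := congrArg (sig l n) h
  rwa [sig_invol hl hn ha', sig_invol hl hn hb'] at this

lemma rev_eq_map (hl : 1 < l) (hn : 1 ≤ n) :
    ((divisorsR n ∆ lamDivisorsR l n).sort (· ≤ ·)).reverse
      = ((divisorsR n ∆ lamDivisorsR l n).sort (· ≤ ·)).map (sig l n) := by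
  haveI : Std.Antisymm (α := ℝ) (· > ·) := ⟨fun a b h h' => absurd h (lt_asymm h')⟩
  set S := divisorsR n ∆ lamDivisorsR l n with hS
  set L := S.sort (· ≤ ·) with hL
  refine (fun hp h1 h2 => List.Perm.eq_of_pairwise' (r := (· > ·)) h1 h2 hp) ?_ ?_ ?_
  · refine (List.reverse_perm L).trans ?_
    apply (Multiset.coe_eq_coe (l₁ := L.map (sig l n)) (l₂ := L)).mp ?_ |>.symm
    have hnodup : (S.val.map (sig l n)).Nodup := by
      apply Multiset.Nodup.map_on ?_ S.nodup
      intro x hx y hy hxy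
      exact sig_injOn hl hn (by exact_mod_cast hx) (by exact_mod_cast hy) hxy
    have himg : (S.image (sig l n)).val = S.val.map (sig l n) := by
      rw [Finset.image_val, Multiset.dedup_eq_self.mpr hnodup]
    calc (↑(L.map (sig l n)) : Multiset ℝ) = Multiset.map (sig l n) ↑L := by
            simp
      _ = Multiset.map (sig l n) S.val := by rw [hL, Finset.sort_eq]
      _ = (S.image (sig l n)).val := himg.symm
      _ = S.val := by rw [image_sig hl hn]
      _ = ↑L := by rw [hL, Finset.sort_eq]
  · exact List.pairwise_reverse.mpr (Finset.sortedLT_sort S).pairwise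
  · apply List.pairwise_map.mpr
    apply List.Pairwise.imp_of_mem ?_ (Finset.sortedLT_sort S).pairwise
    intro a b ha hb hab
    have ha' : 0 < a := pos_of_mem_S hl ((Finset.mem_sort _).mp ha)
    exact div_lt_div_of_pos_left (lnpos hl hn) ha' hab

lemma getElem_rev (hl : 1 < l) (hn : 1 ≤ n) {i : ℕ}
    (hi : i < ((divisorsR n ∆ lamDivisorsR l n).sort (· ≤ ·)).length) :
    ((divisorsR n ∆ lamDivisorsR l n).sort (· ≤ ·))[
        ((divisorsR n ∆ lamDivisorsR l n).sort (· ≤ ·)).length - 1 - i]'(by omega)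
      = sig l n (((divisorsR n ∆ lamDivisorsR l n).sort (· ≤ ·))[i]'hi) := by
  set L := (divisorsR n ∆ lamDivisorsR l n).sort (· ≤ ·) with hL
  have h1 : L.reverse[i]'(by simpa using hi) = L[L.length - 1 - i]'(by omega) :=
    List.getElem_reverse _
  have h2 : (L.map (sig l n))[i]'(by simpa using hi) = sig l n (L[i]'hi) :=
    List.getElem_map _
  rw [← h1]
  simp only [show L.reverse = L.map (sig l n) from rev_eq_map hl hn]
  exact h2

lemma card_EsubD (hl : 1 < l) (hn : 1 ≤ n) :
    (lamDivisorsR l n \ divisorsR n).card = (divisorsR n \ lamDivisorsR l n).card := by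
  have himg : (divisorsR n \ lamDivisorsR l n).image (sig l n)
      = lamDivisorsR l n \ divisorsR n := by
    apply Finset.Subset.antisymm
    · intro y hy
      obtain ⟨x, hx, rfl⟩ := Finset.mem_image.mp hy
      exact key1 hl hn hx
    · intro x hx
      have h1 := key2 hl hn hx
      have h2 : 0 < x := pos_of_mem_E hl (Finset.mem_sdiff.mp hx).1
      exact Finset.mem_image.mpr ⟨sig l n x, h1, sig_invol hl hn h2⟩
  rw [← himg]
  apply Finset.card_image_of_injOn
  intro a ha b hb h
  apply sig_injOn hl hn ?_ ?_ h
  · have : a ∈ divisorsR n ∆ lamDivisorsR l n := mem_S_cases.mpr (Or.inl (by exact_mod_cast ha))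
    exact_mod_cast this
  · have : b ∈ divisorsR n ∆ lamDivisorsR l n := mem_S_cases.mpr (Or.inl (by exact_mod_cast hb))
    exact_mod_cast this

lemma card_S (hl : 1 < l) (hn : 1 ≤ n) :
    (divisorsR n ∆ lamDivisorsR l n).card = 2 * (divisorsR n \ lamDivisorsR l n).card := by
  rw [symmDiff_def]
  rw [show (divisorsR n \ lamDivisorsR l n ⊔ lamDivisorsR l n \ divisorsR n)
    = (divisorsR n \ lamDivisorsR l n) ∪ (lamDivisorsR l n \ divisorsR n) from rfl]
  rw [Finset.card_union_of_disjoint disjoint_sdiff_sdiff, card_EsubD hl hn]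
  ring

lemma m_pos (hl : 1 < l) (hn : 1 ≤ n) : 0 < (divisorsR n \ lamDivisorsR l n).card := by
  rw [← card_EsubD hl hn]
  apply Finset.card_pos.mpr
  refine ⟨l * n, Finset.mem_sdiff.mpr ⟨?_, ?_⟩⟩
  · exact mem_E_iff.mpr ⟨n, Nat.mem_divisors_self n (by omega), rfl⟩
  · intro hmem
    have h1 := le_n_of_mem_D hn hmem
    have h2 := npos hn
    nlinarith


lemma countP_take_eq {S : Finset ℝ} (q : ℝ → Prop) [DecidablePred q] {j : ℕ} {t : ℝ}
    (H1 : ∀ k (hk : k < (S.sort (· ≤ ·)).length), k < j → (S.sort (· ≤ ·))[k]'hk ≤ t)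
    (H2 : ∀ k (hk : k < (S.sort (· ≤ ·)).length), j ≤ k → t < (S.sort (· ≤ ·))[k]'hk) :
    List.countP (fun x => decide (q x)) ((S.sort (· ≤ ·)).take j)
      = (S.filter (fun x => q x ∧ x ≤ t)).card := by
  set L := S.sort (· ≤ ·) with hL
  have hsplit : List.countP (fun x => decide (q x ∧ x ≤ t)) L
      = List.countP (fun x => decide (q x ∧ x ≤ t)) (L.take j)
        + List.countP (fun x => decide (q x ∧ x ≤ t)) (L.drop j) := by
    conv_lhs => rw [← List.take_append_drop j L]
    rw [List.countP_append]
  have hdrop : List.countP (fun x => decide (q x ∧ x ≤ t)) (L.drop j) = 0 := by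
    rw [List.countP_eq_zero]
    intro a ha
    obtain ⟨k, hk, rfl⟩ := List.mem_iff_getElem.mp ha
    have hk2 : j + k < L.length := by
      have : (L.drop j).length = L.length - j := by simp
      omega
    have hget : (L.drop j)[k] = L[j + k]'hk2 := List.getElem_drop
    rw [hget]
    have := H2 (j+k) hk2 (by omega)
    simp only [decide_eq_true_eq]
    rintro ⟨-, hle⟩
    linarith
  have htake : List.countP (fun x => decide (q x ∧ x ≤ t)) (L.take j)
      = List.countP (fun x => decide (q x)) (L.take j) := by
    apply List.countP_congr
    intro x hx
    obtain ⟨k, hk, rfl⟩ := List.mem_iff_getElem.mp hx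
    have hk2 : k < L.length := by
      simp only [List.length_take] at hk
      omega
    have hkj : k < j := by
      simp only [List.length_take] at hk
      omega
    have hget : (L.take j)[k] = L[k]'hk2 := List.getElem_take
    rw [hget]
    have := H1 k hk2 hkj
    simp only [decide_eq_true_eq]
    tauto
  have hfin : List.countP (fun x => decide (q x ∧ x ≤ t)) L
      = (S.filter (fun x => q x ∧ x ≤ t)).card := by
    have h1 : (S.filter (fun x => q x ∧ x ≤ t)).card
        = Multiset.countP (fun x => q x ∧ x ≤ t) S.val := by
      rw [Multiset.countP_eq_card_filter]
      rfl
    rw [h1, ← Finset.sort_eq (s := S) (· ≤ ·), Multiset.coe_countP]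
  omega

lemma count_take_eq (hl : 1 < l) (hn : 1 ≤ n) {j : ℕ} {t : ℝ}
    (H1 : ∀ k (hk : k < ((divisorsR n ∆ lamDivisorsR l n).sort (· ≤ ·)).length),
      k < j → ((divisorsR n ∆ lamDivisorsR l n).sort (· ≤ ·))[k]'hk ≤ t)
    (H2 : ∀ k (hk : k < ((divisorsR n ∆ lamDivisorsR l n).sort (· ≤ ·)).length),
      j ≤ k → t < ((divisorsR n ∆ lamDivisorsR l n).sort (· ≤ ·))[k]'hk) :
    T (krWord l n) j
      = (((divisorsR n).filter (fun x => x ≤ t)).card : ℤ)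
        - (((divisorsR n).filter (fun x => l * x ≤ t)).card : ℤ) := by
  classical
  set S := divisorsR n ∆ lamDivisorsR l n with hS
  set L := S.sort (· ≤ ·) with hL
  have hl0 : (0:ℝ) < l := by linarith
  have hwtake : (krWord l n).take j
      = (L.take j).map (fun x => decide (x ∈ divisorsR n)) := by
    rw [krWord, List.map_take]
  have e1 : ((krWord l n).take j).count true
      = (S.filter (fun x => x ∈ divisorsR n ∧ x ≤ t)).card := by
    rw [hwtake, List.count_eq_countP, List.countP_map,
      ← countP_take_eq (S := S) (fun x => x ∈ divisorsR n) H1 H2]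
    apply List.countP_congr
    intro x _
    simp
  have e2 : ((krWord l n).take j).count false
      = (S.filter (fun x => x ∉ divisorsR n ∧ x ≤ t)).card := by
    rw [hwtake, List.count_eq_countP, List.countP_map,
      ← countP_take_eq (S := S) (fun x => x ∉ divisorsR n) H1 H2]
    apply List.countP_congr
    intro x _
    simp
  have hTfil : S.filter (fun x => x ∈ divisorsR n ∧ x ≤ t)
      = (divisorsR n \ lamDivisorsR l n).filter (fun x => x ≤ t) := by
    ext x
    simp only [Finset.mem_filter, Finset.mem_sdiff, hS, Finset.mem_symmDiff]
    tauto
  have hFfil : S.filter (fun x => x ∉ divisorsR n ∧ x ≤ t)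
      = (lamDivisorsR l n \ divisorsR n).filter (fun x => x ≤ t) := by
    ext x
    simp only [Finset.mem_filter, Finset.mem_sdiff, hS, Finset.mem_symmDiff]
    tauto
  have hDsplit : ((divisorsR n).filter (fun x => x ≤ t)).card
      = ((divisorsR n \ lamDivisorsR l n).filter (fun x => x ≤ t)).card
        + ((divisorsR n ∩ lamDivisorsR l n).filter (fun x => x ≤ t)).card := by
    rw [← Finset.card_union_of_disjoint
        (Finset.disjoint_filter_filter (Finset.disjoint_sdiff_inter _ _)),
      ← Finset.filter_union, Finset.sdiff_union_inter]
  have hEsplit : ((lamDivisorsR l n).filter (fun x => x ≤ t)).card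
      = ((lamDivisorsR l n \ divisorsR n).filter (fun x => x ≤ t)).card
        + ((lamDivisorsR l n ∩ divisorsR n).filter (fun x => x ≤ t)).card := by
    rw [← Finset.card_union_of_disjoint
        (Finset.disjoint_filter_filter (Finset.disjoint_sdiff_inter _ _)),
      ← Finset.filter_union, Finset.sdiff_union_inter]
  have hIcomm : ((divisorsR n ∩ lamDivisorsR l n).filter (fun x => x ≤ t)).card
      = ((lamDivisorsR l n ∩ divisorsR n).filter (fun x => x ≤ t)).card := by
    rw [Finset.inter_comm]
  have hinj : Function.Injective (fun x : ℝ => l * x) :=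
    mul_right_injective₀ (ne_of_gt hl0)
  have hEimg : lamDivisorsR l n = (divisorsR n).image (fun x : ℝ => l * x) := by
    rw [lamDivisorsR, divisorsR, Finset.image_image]
    rfl
  have hEcard : ((lamDivisorsR l n).filter (fun x => x ≤ t)).card
      = ((divisorsR n).filter (fun x => l * x ≤ t)).card := by
    rw [hEimg, Finset.filter_image (f := fun x : ℝ => l * x)]
    exact Finset.card_image_of_injective _ hinj
  simp only [T, e1, e2, hTfil, hFfil]
  omega


lemma sorted_get_le {k j : ℕ}
    (hk : k < ((divisorsR n ∆ lamDivisorsR l n).sort (· ≤ ·)).length)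
    (hj : j < ((divisorsR n ∆ lamDivisorsR l n).sort (· ≤ ·)).length) (hkj : k ≤ j) :
    ((divisorsR n ∆ lamDivisorsR l n).sort (· ≤ ·))[k]'hk
      ≤ ((divisorsR n ∆ lamDivisorsR l n).sort (· ≤ ·))[j]'hj := by
  rcases Nat.lt_or_ge k j with h | h
  · exact le_of_lt ((List.pairwise_iff_getElem.mp
      (Finset.sortedLT_sort _).pairwise) k j hk hj h)
  · have : k = j := by omega
    subst this
    exact le_rfl

lemma sorted_get_lt {k j : ℕ}
    (hk : k < ((divisorsR n ∆ lamDivisorsR l n).sort (· ≤ ·)).length)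
    (hj : j < ((divisorsR n ∆ lamDivisorsR l n).sort (· ≤ ·)).length) (hkj : k < j) :
    ((divisorsR n ∆ lamDivisorsR l n).sort (· ≤ ·))[k]'hk
      < ((divisorsR n ∆ lamDivisorsR l n).sort (· ≤ ·))[j]'hj :=
  (List.pairwise_iff_getElem.mp (Finset.sortedLT_sort _).pairwise) k j hk hj hkj

lemma T_nonneg (hl : 1 < l) (hn : 1 ≤ n) : ∀ j, 0 ≤ T (krWord l n) j := by
  have hmono : ∀ t : ℝ, ((divisorsR n).filter (fun x => l * x ≤ t)).card
      ≤ ((divisorsR n).filter (fun x => x ≤ t)).card := by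
    intro t
    apply Finset.card_le_card
    intro x hx
    rw [Finset.mem_filter] at hx ⊢
    obtain ⟨hm, hle⟩ := hx
    have h1 : 1 ≤ x := one_le_of_mem_D hm
    refine ⟨hm, ?_⟩
    nlinarith
  have key : ∀ j, j ≤ ((divisorsR n ∆ lamDivisorsR l n).sort (· ≤ ·)).length
      → 0 ≤ T (krWord l n) j := by
    intro j hj
    rcases Nat.eq_zero_or_pos j with rfl | hj0
    · rw [T_zero]
    · have hjl : j - 1 < ((divisorsR n ∆ lamDivisorsR l n).sort (· ≤ ·)).length := by omega
      set t := ((divisorsR n ∆ lamDivisorsR l n).sort (· ≤ ·))[j-1]'hjl with ht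
      have heq := count_take_eq hl hn (j := j) (t := t)
        (fun k hk hkj => sorted_get_le hk hjl (by omega))
        (fun k hk hkj => sorted_get_lt hjl hk (by omega))
      rw [heq]
      have := hmono t
      omega
  intro j
  by_cases hj : j ≤ ((divisorsR n ∆ lamDivisorsR l n).sort (· ≤ ·)).length
  · exact key j hj
  · have hlen : (krWord l n).length
        = ((divisorsR n ∆ lamDivisorsR l n).sort (· ≤ ·)).length := by
      rw [krWord, List.length_map]
    have htk : (krWord l n).take j
        = (krWord l n).take ((divisorsR n ∆ lamDivisorsR l n).sort (· ≤ ·)).length := by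
      rw [List.take_of_length_le (by omega), List.take_of_length_le (by omega)]
    have h2 := key _ le_rfl
    simp only [T, htk] at *
    exact h2

lemma krWord_sym (hl : 1 < l) (hn : 1 ≤ n) :
    ∀ i, i < 2 * (divisorsR n \ lamDivisorsR l n).card →
      (krWord l n).getD (2 * (divisorsR n \ lamDivisorsR l n).card - 1 - i) false
        = !((krWord l n).getD i false) := by
  intro i hi
  set m := (divisorsR n \ lamDivisorsR l n).card with hm
  have hLlen : ((divisorsR n ∆ lamDivisorsR l n).sort (· ≤ ·)).length = 2*m := by
    rw [Finset.length_sort, card_S hl hn]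
  have hwlen : (krWord l n).length = 2*m := by
    rw [krWord, List.length_map, hLlen]
  have h1 : i < (krWord l n).length := by omega
  have h2 : 2*m - 1 - i < (krWord l n).length := by omega
  rw [List.getD_eq_getElem _ _ h2, List.getD_eq_getElem _ _ h1]
  have hwlen2 : (krWord l n).length
      = ((divisorsR n ∆ lamDivisorsR l n).sort (· ≤ ·)).length := by
    rw [krWord, List.length_map]
  have hg : ∀ k (hk : k < (krWord l n).length),
      (krWord l n)[k]'hk = decide ((((divisorsR n ∆ lamDivisorsR l n).sort (· ≤ ·))[k]'
        (by omega)) ∈ divisorsR n) := by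
    intro k hk
    simp only [krWord]
    rw [List.getElem_map]
  rw [hg _ h2, hg _ h1]
  have hrev := getElem_rev hl hn (i := i) (hi := by omega)
  have hidx : ((divisorsR n ∆ lamDivisorsR l n).sort (· ≤ ·)).length - 1 - i
      = 2*m - 1 - i := by omega
  have hrev2 : (((divisorsR n ∆ lamDivisorsR l n).sort (· ≤ ·))[2*m - 1 - i]'
      (by omega)) = sig l n (((divisorsR n ∆ lamDivisorsR l n).sort (· ≤ ·))[i]'(by omega)) := by
    rw [← hrev]
    congr 1
    omega
  rw [hrev2]
  have hmem : (((divisorsR n ∆ lamDivisorsR l n).sort (· ≤ ·))[i]'(by omega))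
      ∈ divisorsR n ∆ lamDivisorsR l n := by
    rw [← Finset.mem_sort (· ≤ ·)]
    exact List.getElem_mem _
  have hflip := sig_flip hl hn hmem
  by_cases hx : (((divisorsR n ∆ lamDivisorsR l n).sort (· ≤ ·))[i]'(by omega)) ∈ divisorsR n
  · simp only [hx, decide_true, Bool.not_true]
    have hs : ¬ (sig l n (((divisorsR n ∆ lamDivisorsR l n).sort (· ≤ ·))[i]'(by omega))
        ∈ divisorsR n) := fun h => (hflip.mp h) hx
    simp [hs]
  · have hs := hflip.mpr hx
    simp [hx, hs]

lemma T_mid (hl : 1 < l) (hn : 1 ≤ n) :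
    T (krWord l n) ((divisorsR n \ lamDivisorsR l n).card)
      = (((divisorsR n).filter (fun x => x ≤ Real.sqrt (l*n))).card : ℤ)
        - (((divisorsR n).filter (fun x => l*x ≤ Real.sqrt (l*n))).card : ℤ) := by
  set m := (divisorsR n \ lamDivisorsR l n).card with hm
  have hm1 : 1 ≤ m := m_pos hl hn
  have hLlen : ((divisorsR n ∆ lamDivisorsR l n).sort (· ≤ ·)).length = 2*m := by
    rw [Finset.length_sort, card_S hl hn]
  have hmlt : m < ((divisorsR n ∆ lamDivisorsR l n).sort (· ≤ ·)).length := by omega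
  have hm1lt : m - 1 < ((divisorsR n ∆ lamDivisorsR l n).sort (· ≤ ·)).length := by omega
  set x := ((divisorsR n ∆ lamDivisorsR l n).sort (· ≤ ·))[m-1]'hm1lt with hxdef
  set y := ((divisorsR n ∆ lamDivisorsR l n).sort (· ≤ ·))[m]'hmlt with hydef
  have hsig : y = sig l n x := by
    have hrev := getElem_rev hl hn (i := m - 1) (hi := hm1lt)
    rw [hydef]
    rw [← hrev]
    congr 1
    omega
  have hxmem : x ∈ divisorsR n ∆ lamDivisorsR l n := by
    rw [hxdef, ← Finset.mem_sort (· ≤ ·)]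
    exact List.getElem_mem _
  have hxpos : 0 < x := pos_of_mem_S hl hxmem
  have hxy : x < y := sorted_get_lt hm1lt hmlt (by omega)
  have hln : (0:ℝ) < l * n := lnpos hl hn
  have hxt : x < Real.sqrt (l*n) := by
    rw [Real.lt_sqrt hxpos.le]
    have : x < l * n / x := by rw [← sig, ← hsig]; exact hxy
    rw [lt_div_iff₀ hxpos] at this
    nlinarith
  have hypos : 0 < y := lt_trans hxpos hxy
  have hty : Real.sqrt (l*n) < y := by
    rw [Real.sqrt_lt' hypos]
    have hxy2 : y * x = l * n := by
      rw [hsig, sig]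
      field_simp
    nlinarith
  apply count_take_eq hl hn (j := m) (t := Real.sqrt (l*n))
  · intro k hk hkm
    calc ((divisorsR n ∆ lamDivisorsR l n).sort (· ≤ ·))[k]'hk ≤ x :=
          sorted_get_le hk hm1lt (by omega)
      _ ≤ Real.sqrt (l*n) := le_of_lt hxt
  · intro k hk hmk
    calc Real.sqrt (l*n) < y := hty
      _ ≤ ((divisorsR n ∆ lamDivisorsR l n).sort (· ≤ ·))[k]'hk :=
          sorted_get_le hmlt hk (by omega)

lemma middle_eq (hl : 1 < l) (hn : 1 ≤ n) :
    (middleCount l n : ℤ)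
      = (((divisorsR n).filter (fun x => x ≤ Real.sqrt (l*n))).card : ℤ)
        - (((divisorsR n).filter (fun x => l*x ≤ Real.sqrt (l*n))).card : ℤ) := by
  have hl0 : (0:ℝ) < l := by linarith
  have hn0 : (0:ℝ) < n := npos hn
  have hAB : ((do let a ← n.divisors; pure ((a:ℝ))) : Finset ℝ) = divisorsR n := by
    ext z
    simp [Bind.bind, Pure.pure, divisorsR]
  have h0 : middleCount l n = ((divisorsR n).filter
      (fun x => Real.sqrt (n/l) < x ∧ x ≤ Real.sqrt (l*n))).card := by
    rw [middleCount, hAB]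
  have hsqrtmul : Real.sqrt (n/l) * l = Real.sqrt (l*n) := by
    have h1 : Real.sqrt ((n:ℝ)/l) * Real.sqrt (l^2) = Real.sqrt (((n:ℝ)/l) * l^2) :=
      (Real.sqrt_mul (by positivity) _).symm
    rw [Real.sqrt_sq hl0.le] at h1
    rw [h1]
    congr 1
    field_simp
  have hsq : ∀ x : ℝ, (l * x ≤ Real.sqrt (l*n) ↔ x ≤ Real.sqrt (n/l)) := by
    intro x
    rw [← hsqrtmul, mul_comm l x]
    exact mul_le_mul_iff_of_pos_right hl0
  have hmono : Real.sqrt ((n:ℝ)/l) ≤ Real.sqrt (l*n) := by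
    apply Real.sqrt_le_sqrt
    rw [div_le_iff₀ hl0]
    nlinarith [mul_nonneg (mul_nonneg hn0.le (by linarith : (0:ℝ) ≤ l - 1))
      (by linarith : (0:ℝ) ≤ l + 1)]
  have hEfil : (divisorsR n).filter (fun x => l * x ≤ Real.sqrt (l*n))
      = (divisorsR n).filter (fun x => x ≤ Real.sqrt ((n:ℝ)/l)) := by
    apply Finset.filter_congr
    intro x _
    exact hsq x
  have hsplit : (((divisorsR n).filter (fun x => x ≤ Real.sqrt (l*n))).filter
        (fun x => x ≤ Real.sqrt ((n:ℝ)/l))).card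
      + (((divisorsR n).filter (fun x => x ≤ Real.sqrt (l*n))).filter
        (fun x => ¬ (x ≤ Real.sqrt ((n:ℝ)/l)))).card
      = ((divisorsR n).filter (fun x => x ≤ Real.sqrt (l*n))).card :=
    Finset.card_filter_add_card_filter_not _
  have hff1 : ((divisorsR n).filter (fun x => x ≤ Real.sqrt (l*n))).filter
        (fun x => x ≤ Real.sqrt ((n:ℝ)/l))
      = (divisorsR n).filter (fun x => x ≤ Real.sqrt ((n:ℝ)/l)) := by
    rw [Finset.filter_filter]
    apply Finset.filter_congr
    intro x _
    constructor
    · tauto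
    · intro h
      exact ⟨le_trans h hmono, h⟩
  have hff2 : ((divisorsR n).filter (fun x => x ≤ Real.sqrt (l*n))).filter
        (fun x => ¬ (x ≤ Real.sqrt ((n:ℝ)/l)))
      = (divisorsR n).filter (fun x => Real.sqrt ((n:ℝ)/l) < x ∧ x ≤ Real.sqrt (l*n)) := by
    rw [Finset.filter_filter]
    apply Finset.filter_congr
    intro x _
    rw [not_le]
    tauto
  rw [h0, hEfil]
  rw [hff1, hff2] at hsplit
  omega

end KRProof


/-- The number of centered tunnels of `⟨⟨n⟩⟩_λ` equals the number of
`λ`-middle divisors of `n`. -/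
theorem ct_krWord_eq_middleCount (l : ℝ) (hl : 1 < l) (n : ℕ) (hn : 1 ≤ n) :
    ct (krWord l n) = middleCount l n := by
  have hwlen : (krWord l n).length = 2 * (divisorsR n \ lamDivisorsR l n).card := by
    rw [krWord, List.length_map, Finset.length_sort, KRProof.card_S hl hn]
  have h := KRProof.ct_eq_T (krWord l n) _ hwlen
    (KRProof.krWord_sym hl hn) (KRProof.T_nonneg hl hn)
  rw [KRProof.T_mid hl hn, ← KRProof.middle_eq hl hn] at h
  exact_mod_cast h
end

section
/- For every real number λ > 1 and every integer n ≥ 1, Ω(⟨⟨n⟩⟩_λ) = blocks_λ(n); that is, the number of irreducible Dyck factors in the unique factorization of the Dyck word ⟨⟨n⟩⟩_λ as a concatenation of irreducible Dyck words equals the number of connected components of ⋃_{d|n} [d, λd]. -/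
open scoped Classical symmDiff

/-! ### auxiliary -/

lemma KR.sort_filter_len (s : Finset ℝ) (q : ℝ → Bool) :
    ((s.sort (· ≤ ·)).filter q).length = (s.filter (fun x => q x)).card := by
  rw [← List.countP_eq_length_filter, (Finset.sort_perm_toList s (· ≤ ·)).countP_eq,
    List.countP_eq_length_filter, Finset.card, Finset.filter_val, ← Finset.coe_toList,
    Multiset.filter_coe, Multiset.coe_card]
  simp

lemma KR.take_sorted_eq_filter {s : List ℝ} (hs : s.Pairwise (· < ·)) {i : ℕ} (hi : i < s.length) :
    s.take (i+1) = s.filter (fun x => decide (x ≤ s.get ⟨i, hi⟩)) := by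
  set u := s.get ⟨i, hi⟩ with hu
  have h1 : ∀ x ∈ s.take (i+1), x ≤ u := by
    intro x hx
    obtain ⟨j, hj, rfl⟩ := List.mem_iff_getElem.mp hx
    rw [List.getElem_take]
    have hj' : j < i + 1 := lt_of_lt_of_le hj (by simp [List.length_take])
    rcases eq_or_lt_of_le (Nat.lt_succ_iff.mp hj') with h | h
    · subst h; simp [hu, List.get_eq_getElem]
    · exact le_of_lt (hs.rel_get_of_lt (a := ⟨j, lt_trans h hi⟩) (b := ⟨i, hi⟩) h)
  have h2 : ∀ x ∈ s.drop (i+1), ¬ (x ≤ u) := by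
    intro x hx
    obtain ⟨j, hj, rfl⟩ := List.mem_iff_getElem.mp hx
    have hlen : (List.drop (i+1) s).length = s.length - (i+1) := List.length_drop
    have hij : i + 1 + j < s.length := by omega
    rw [List.getElem_drop]
    exact not_le_of_gt (hs.rel_get_of_lt (a := ⟨i, hi⟩) (b := ⟨i+1+j, hij⟩) (by simp; omega))
  conv_rhs => rw [← List.take_append_drop (i+1) s, List.filter_append]
  rw [List.filter_eq_self.mpr (by intro a ha; simpa using h1 a ha),
    List.filter_eq_nil_iff.mpr (by intro a ha; simpa using h2 a ha), List.append_nil]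

lemma divisorsR_eq (n : ℕ) : divisorsR n = n.divisors.image (fun d : ℕ => (d:ℝ)) := by
  ext x; simp [divisorsR]

lemma lamDivisorsR_eq (l : ℝ) (n : ℕ) :
    lamDivisorsR l n = n.divisors.image (fun d : ℕ => l*(d:ℝ)) := by
  ext x; simp [lamDivisorsR]

noncomputable def krS (l : ℝ) (n : ℕ) : List ℝ :=
  (divisorsR n ∆ lamDivisorsR l n).sort (· ≤ ·)

lemma KR.filter_len_krS (l : ℝ) (n : ℕ) (q : ℝ → Bool) :
    ((krS l n).filter q).length
      = ((divisorsR n ∆ lamDivisorsR l n).filter (fun x => q x)).card :=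
  KR.sort_filter_len _ q

lemma krS_sorted (l : ℝ) (n : ℕ) : (krS l n).Pairwise (· < ·) := (Finset.sortedLT_sort _).pairwise

lemma krWord_eq (l : ℝ) (n : ℕ) :
    krWord l n = (krS l n).map (fun x => decide (x ∈ divisorsR n)) := rfl

lemma krWord_length (l : ℝ) (n : ℕ) : (krWord l n).length = (krS l n).length := by
  rw [krWord_eq]; exact List.length_map _

noncomputable def krA (l : ℝ) (n : ℕ) (x : ℝ) : ℕ :=
  (n.divisors.filter (fun d : ℕ => (d:ℝ) ≤ x)).card

noncomputable def krB (l : ℝ) (n : ℕ) (x : ℝ) : ℕ :=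
  (n.divisors.filter (fun d : ℕ => l*(d:ℝ) ≤ x)).card

noncomputable def maxDivs (l : ℝ) (n : ℕ) : Finset ℕ :=
  n.divisors.filter (fun d : ℕ => ∀ e ∈ n.divisors, (d:ℝ) < (e:ℝ) → l*(d:ℝ) < (e:ℝ))


lemma count_true_take' (l : ℝ) (n : ℕ) (i : ℕ) (hi : i < (krS l n).length) :
    ((krWord l n).take (i+1)).count true
      = ((divisorsR n \ lamDivisorsR l n).filter (· ≤ (krS l n).get ⟨i,hi⟩)).card := by
  rw [krWord_eq, ← List.map_take, KR.take_sorted_eq_filter (krS_sorted l n) hi]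
  have h1 : ∀ (t : List ℝ), (t.map (fun x => decide (x ∈ divisorsR n))).count true
      = (t.filter (fun x => decide (x ∈ divisorsR n))).length := by
    intro t
    simp [List.count_eq_countP, List.countP_eq_length_filter, List.filter_map,
      Function.comp_def]
  rw [h1, List.filter_filter, KR.filter_len_krS]
  congr 1
  ext x
  simp only [Finset.mem_filter, Finset.mem_sdiff, Finset.mem_symmDiff, Bool.and_eq_true,
    decide_eq_true_eq]
  tauto

lemma count_false_take' (l : ℝ) (n : ℕ) (i : ℕ) (hi : i < (krS l n).length) :
    ((krWord l n).take (i+1)).count false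
      = ((lamDivisorsR l n \ divisorsR n).filter (· ≤ (krS l n).get ⟨i,hi⟩)).card := by
  rw [krWord_eq, ← List.map_take, KR.take_sorted_eq_filter (krS_sorted l n) hi]
  have h1 : ∀ (t : List ℝ), (t.map (fun x => decide (x ∈ divisorsR n))).count false
      = (t.filter (fun x => !decide (x ∈ divisorsR n))).length := by
    intro t
    simp [List.count_eq_countP, List.countP_eq_length_filter, List.filter_map,
      Function.comp_def]
  rw [h1, List.filter_filter, KR.filter_len_krS]
  congr 1
  ext x
  simp only [Finset.mem_filter, Finset.mem_sdiff, Finset.mem_symmDiff, Bool.and_eq_true,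
    Bool.not_eq_true', decide_eq_false_iff_not, decide_eq_true_eq]
  tauto

lemma card_DR_filter (n : ℕ) (x : ℝ) :
    ((divisorsR n).filter (· ≤ x)).card = (n.divisors.filter (fun d : ℕ => (d:ℝ) ≤ x)).card := by
  rw [divisorsR_eq, Finset.filter_image]
  apply Finset.card_image_of_injective
  exact fun a b h => by exact_mod_cast h

lemma card_LDR_filter (l : ℝ) (hl : 1 < l) (n : ℕ) (x : ℝ) :
    ((lamDivisorsR l n).filter (· ≤ x)).card
      = (n.divisors.filter (fun d : ℕ => l*(d:ℝ) ≤ x)).card := by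
  rw [lamDivisorsR_eq, Finset.filter_image]
  have hl0 : l ≠ 0 := ne_of_gt (lt_trans zero_lt_one hl)
  apply Finset.card_image_of_injective
  intro a b hab
  have := mul_left_cancel₀ hl0 hab
  exact_mod_cast this

lemma count_take_add (l : ℝ) (hl : 1 < l) (n : ℕ) (i : ℕ) (hi : i < (krS l n).length) :
    (((krWord l n).take (i+1)).count true
        + ((divisorsR n ∩ lamDivisorsR l n).filter (· ≤ (krS l n).get ⟨i,hi⟩)).card
      = krA l n ((krS l n).get ⟨i,hi⟩))
    ∧ (((krWord l n).take (i+1)).count false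
        + ((divisorsR n ∩ lamDivisorsR l n).filter (· ≤ (krS l n).get ⟨i,hi⟩)).card
      = krB l n ((krS l n).get ⟨i,hi⟩)) := by
  set u := (krS l n).get ⟨i,hi⟩ with hu
  constructor
  · rw [count_true_take' l n i hi, krA, ← card_DR_filter n u, ← hu]
    rw [← Finset.card_union_of_disjoint
      (Finset.disjoint_filter_filter (Finset.disjoint_sdiff_inter _ _)),
      ← Finset.filter_union, Finset.sdiff_union_inter]
  · rw [count_false_take' l n i hi, krB, ← card_LDR_filter l hl n u, ← hu,
      Finset.inter_comm]
    rw [← Finset.card_union_of_disjoint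
      (Finset.disjoint_filter_filter (Finset.disjoint_sdiff_inter _ _)),
      ← Finset.filter_union, Finset.sdiff_union_inter]

lemma krB_le_krA (l : ℝ) (hl : 1 < l) (n : ℕ) (x : ℝ) : krB l n x ≤ krA l n x := by
  rw [krA, krB]
  refine Finset.card_le_card (fun d hd => ?_)
  simp only [Finset.mem_filter] at hd ⊢
  have h1 : ((d:ℝ)) ≤ l * d := le_mul_of_one_le_left (by positivity) hl.le
  exact ⟨hd.1, le_trans h1 hd.2⟩

lemma ballot (l : ℝ) (hl : 1 < l) (n : ℕ) (m : ℕ) :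
    ((krWord l n).take m).count false ≤ ((krWord l n).take m).count true := by
  rcases Nat.eq_zero_or_pos m with rfl | hm
  · simp
  rcases le_or_gt (krS l n).length m with h | h
  · have hw : (krWord l n).take m = krWord l n :=
      List.take_of_length_le (by rw [krWord_length]; exact h)
    rcases Nat.eq_zero_or_pos (krS l n).length with h0 | h0
    · have : krWord l n = [] := List.eq_nil_of_length_eq_zero (by rw [krWord_length]; exact h0)
      simp [hw, this]
    · have hi : (krS l n).length - 1 < (krS l n).length := by omega
      have hw2 : krWord l n = (krWord l n).take ((krS l n).length - 1 + 1) := by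
        rw [List.take_of_length_le (by rw [krWord_length]; omega)]
      have h1 := (count_take_add l hl n _ hi).1
      have h2 := (count_take_add l hl n _ hi).2
      have h3 := krB_le_krA l hl n ((krS l n).get ⟨_, hi⟩)
      rw [hw, hw2]
      omega
  · have hi : m - 1 < (krS l n).length := by omega
    have hm1 : m - 1 + 1 = m := by omega
    have h1 := (count_take_add l hl n _ hi).1
    have h2 := (count_take_add l hl n _ hi).2
    have h3 := krB_le_krA l hl n ((krS l n).get ⟨_, hi⟩)
    rw [← hm1]
    omega

lemma isDyck_take_iff (l : ℝ) (hl : 1 < l) (n : ℕ) (i : ℕ) (hi : i < (krS l n).length) :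
    IsDyck ((krWord l n).take (i+1)) ↔
      krA l n ((krS l n).get ⟨i,hi⟩) = krB l n ((krS l n).get ⟨i,hi⟩) := by
  have h1 := (count_take_add l hl n i hi).1
  have h2 := (count_take_add l hl n i hi).2
  constructor
  · intro hd
    have := hd.2
    omega
  · intro hAB
    constructor
    · intro p hp
      have hp' : p <+: krWord l n := hp.trans (List.take_prefix _ _)
      obtain ⟨m, rfl⟩ : ∃ m, p = (krWord l n).take m :=
        ⟨p.length, List.prefix_iff_eq_take.mp hp'⟩
      exact ballot l hl n _
    · omega

lemma Omega_eq_card_T (l : ℝ) (hl : 1 < l) (n : ℕ) :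
    Omega (krWord l n) =
      ((divisorsR n ∆ lamDivisorsR l n).filter (fun x => krA l n x = krB l n x)).card := by
  rw [Omega]
  refine Finset.card_bij (fun i hi => (krS l n).get ⟨i, by
      have := Finset.mem_range.mp (Finset.mem_filter.mp hi).1
      rwa [krWord_length] at this⟩) ?_ ?_ ?_
  · intro a ha
    have hmem := Finset.mem_filter.mp ha
    have hlt : a < (krS l n).length := by
      have := Finset.mem_range.mp hmem.1; rwa [krWord_length] at this
    refine Finset.mem_filter.mpr ⟨?_, ?_⟩
    · exact (Finset.mem_sort _).mp (List.get_mem _ _)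
    · exact (isDyck_take_iff l hl n a hlt).mp hmem.2
  · intro a ha b hb hab
    by_contra hne
    have hsort := krS_sorted l n
    rcases lt_or_gt_of_ne hne with h | h
    · exact absurd hab (ne_of_lt (hsort.rel_get_of_lt h))
    · exact absurd hab.symm (ne_of_lt (hsort.rel_get_of_lt h))
  · intro x hx
    have hmem := Finset.mem_filter.mp hx
    have hx' : x ∈ krS l n := (Finset.mem_sort _).mpr hmem.1
    obtain ⟨⟨j, hj⟩, hget⟩ := List.mem_iff_get.mp hx'
    refine ⟨j, Finset.mem_filter.mpr ⟨Finset.mem_range.mpr (by rwa [krWord_length]), ?_⟩, hget⟩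
    refine (isDyck_take_iff l hl n j hj).mpr ?_
    rw [hget]
    exact hmem.2

lemma key_AB (l : ℝ) (hl : 1 < l) (n : ℕ) (x : ℝ) (hx : krA l n x = krB l n x) :
    ∀ e ∈ n.divisors, (e:ℝ) ≤ x → l*(e:ℝ) ≤ x := by
  intro e he hle
  have hsub : (n.divisors.filter (fun d : ℕ => l*(d:ℝ) ≤ x))
      ⊆ (n.divisors.filter (fun d : ℕ => (d:ℝ) ≤ x)) := by
    intro d hd
    simp only [Finset.mem_filter] at hd ⊢
    have h1 : ((d:ℝ)) ≤ l * d := le_mul_of_one_le_left (by positivity) hl.le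
    exact ⟨hd.1, le_trans h1 hd.2⟩
  have heq := Finset.eq_of_subset_of_card_le hsub (le_of_eq hx)
  have : e ∈ n.divisors.filter (fun d : ℕ => (d:ℝ) ≤ x) := Finset.mem_filter.mpr ⟨he, hle⟩
  rw [← heq] at this
  exact (Finset.mem_filter.mp this).2

lemma card_T_eq_maxDivs (l : ℝ) (hl : 1 < l) (n : ℕ) :
    ((divisorsR n ∆ lamDivisorsR l n).filter (fun x => krA l n x = krB l n x)).card
      = (maxDivs l n).card := by
  have hl0 : (0:ℝ) < l := lt_trans zero_lt_one hl
  refine (Finset.card_bij (s := maxDivs l n)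
    (t := (divisorsR n ∆ lamDivisorsR l n).filter (fun x => krA l n x = krB l n x))
    (fun d _ => l * (d:ℝ)) ?_ ?_ ?_).symm
  · intro d hd
    have hd' := Finset.mem_filter.mp hd
    have hd1 : (1:ℝ) ≤ (d:ℝ) := by exact_mod_cast Nat.pos_of_mem_divisors hd'.1
    have hdlt : (d:ℝ) < l*(d:ℝ) := by nlinarith
    have hmemL : l*(d:ℝ) ∈ lamDivisorsR l n := by
      rw [lamDivisorsR_eq]; exact Finset.mem_image_of_mem _ hd'.1
    have hnotD : l*(d:ℝ) ∉ divisorsR n := by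
      intro h
      rw [divisorsR_eq, Finset.mem_image] at h
      obtain ⟨e, he, heq⟩ := h
      have h1 : (d:ℝ) < (e:ℝ) := by rw [heq]; exact hdlt
      have h2 := hd'.2 e he h1
      rw [heq] at h2
      exact lt_irrefl _ h2
    refine Finset.mem_filter.mpr ⟨Finset.mem_symmDiff.mpr (Or.inr ⟨hmemL, hnotD⟩), ?_⟩
    refine le_antisymm ?_ (krB_le_krA l hl n _)
    rw [krA, krB]
    refine Finset.card_le_card (fun e he => ?_)
    simp only [Finset.mem_filter] at he ⊢
    refine ⟨he.1, ?_⟩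
    rcases le_or_gt ((e:ℕ):ℝ) (d:ℝ) with h | h
    · exact mul_le_mul_of_nonneg_left h hl0.le
    · exact absurd he.2 (not_le_of_gt (hd'.2 e he.1 h))
  · intro a ha b hb hab
    have := mul_left_cancel₀ hl0.ne' hab
    exact_mod_cast this
  · intro b hb
    have hb' := Finset.mem_filter.mp hb
    rcases Finset.mem_symmDiff.mp hb'.1 with ⟨hD, hnL⟩ | ⟨hL, hnD⟩
    · exfalso
      rw [divisorsR_eq, Finset.mem_image] at hD
      obtain ⟨e, he, heq⟩ := hD
      have h1 : l*(e:ℝ) ≤ b := key_AB l hl n b hb'.2 e he (le_of_eq heq)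
      have he1 : (1:ℝ) ≤ (e:ℝ) := by exact_mod_cast Nat.pos_of_mem_divisors he
      nlinarith
    · rw [lamDivisorsR_eq, Finset.mem_image] at hL
      obtain ⟨d, hdmem, heq⟩ := hL
      refine ⟨d, Finset.mem_filter.mpr ⟨hdmem, fun e he hlt => ?_⟩, heq⟩
      by_contra hc
      push_neg at hc
      have h1 : (e:ℝ) ≤ b := by rw [← heq]; exact hc
      have h2 := key_AB l hl n b hb'.2 e he h1
      rw [← heq] at h2
      have h3 : (e:ℝ) ≤ (d:ℝ) := (mul_le_mul_iff_right₀ hl0).mp h2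
      exact absurd hlt (not_lt_of_ge h3)

lemma Omega_eq_maxDivs (l : ℝ) (hl : 1 < l) (n : ℕ) :
    Omega (krWord l n) = (maxDivs l n).card :=
  (Omega_eq_card_T l hl n).trans (card_T_eq_maxDivs l hl n)

lemma blocksCount_eq_maxDivs (l : ℝ) (hl : 1 < l) (n : ℕ) (hn : 1 ≤ n) :
    blocksCount l n = (maxDivs l n).card := by
  classical
  rw [blocksCount]
  set U : Set ℝ := ⋃ d ∈ n.divisors, Set.Icc (d : ℝ) (l * d) with hU
  have hl0 : (0:ℝ) < l := lt_trans zero_lt_one hl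
  have hIccU : ∀ d ∈ n.divisors, Set.Icc (d:ℝ) (l*d) ⊆ U := by
    intro d hd
    exact Set.subset_iUnion₂ (s := fun d (_ : d ∈ n.divisors) => Set.Icc (d:ℝ) (l*d)) d hd
  have hone : ∀ d ∈ n.divisors, (1:ℝ) ≤ (d:ℝ) := by
    intro d hd; exact_mod_cast Nat.pos_of_mem_divisors hd
  have hdmemU : ∀ d ∈ n.divisors, (d:ℝ) ∈ U := by
    intro d hd
    exact hIccU d hd ⟨le_refl _, le_mul_of_one_le_left (Nat.cast_nonneg d) hl.le⟩
  have hmemU_iff : ∀ y : ℝ, y ∈ U → ∃ e ∈ n.divisors, y ∈ Set.Icc (e:ℝ) (l*e) := by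
    intro y hy
    obtain ⟨e, he, hy'⟩ := Set.mem_iUnion₂.mp hy
    exact ⟨e, he, hy'⟩
  -- key: points of a basic interval are in the component of its left endpoint
  have hkey : ∀ d (hd : d ∈ n.divisors), ∀ z : ↥U, (z:ℝ) ∈ Set.Icc (d:ℝ) (l*d) →
      z ∈ connectedComponent (⟨(d:ℝ), hdmemU d hd⟩ : ↥U) := by
    intro d hd z hz
    have hpre : IsPreconnected ((Subtype.val) ⁻¹' (Set.Icc (d:ℝ) (l*d)) : Set ↥U) := by
      rw [← Topology.IsInducing.subtypeVal.isPreconnected_image, Subtype.image_preimage_coe,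
        Set.inter_eq_self_of_subset_right (hIccU d hd)]
      exact isPreconnected_Icc
    have hd0 : (⟨(d:ℝ), hdmemU d hd⟩ : ↥U) ∈
        ((Subtype.val) ⁻¹' (Set.Icc (d:ℝ) (l*d)) : Set ↥U) := by
      simp only [Set.mem_preimage]
      exact ⟨le_refl _, le_mul_of_one_le_left (Nat.cast_nonneg d) hl.le⟩
    exact hpre.subset_connectedComponent hd0 hz
  -- gap construction
  have hgap : ∀ d ∈ maxDivs l n, ∀ e ∈ n.divisors, (d:ℝ) < (e:ℝ) →
      ∃ y : ℝ, (d:ℝ) < y ∧ y < (e:ℝ) ∧ y ∉ U := by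
    intro d hd e he hlt
    have hd' := Finset.mem_filter.mp hd
    set G : Finset ℕ := n.divisors.filter (fun e' : ℕ => l*(d:ℝ) < (e':ℝ)) with hG
    have heG : e ∈ G := Finset.mem_filter.mpr ⟨he, hd'.2 e he hlt⟩
    have hGne : G.Nonempty := ⟨e, heG⟩
    set m := G.min' hGne with hm
    have hmG := G.min'_mem hGne
    have hdm : l*(d:ℝ) < (m:ℝ) := (Finset.mem_filter.mp hmG).2
    have hme : m ≤ e := G.min'_le e heG
    have hme' : (m:ℝ) ≤ (e:ℝ) := by exact_mod_cast hme
    have hd1 : (1:ℝ) ≤ (d:ℝ) := hone d hd'.1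
    refine ⟨(l*(d:ℝ) + m)/2, ?_, ?_, ?_⟩
    · nlinarith
    · nlinarith
    · intro hy
      obtain ⟨e', he', hy'⟩ := hmemU_iff _ hy
      rcases le_or_gt ((e':ℕ):ℝ) ((d:ℕ):ℝ) with h | h
      · have : l*(e':ℝ) ≤ l*(d:ℝ) := mul_le_mul_of_nonneg_left h hl0.le
        have := hy'.2
        nlinarith
      · have h2 : l*(d:ℝ) < (e':ℝ) := hd'.2 e' he' h
        have h3 : e' ∈ G := Finset.mem_filter.mpr ⟨he', h2⟩
        have h4 : m ≤ e' := G.min'_le e' h3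
        have h5 : (m:ℝ) ≤ (e':ℝ) := by exact_mod_cast h4
        have := hy'.1
        nlinarith
  -- injectivity core
  have hcore : ∀ d (hd : d ∈ maxDivs l n), ∀ e (he : e ∈ n.divisors), (d:ℝ) < (e:ℝ) →
      connectedComponent (⟨(d:ℝ), hdmemU d (Finset.mem_filter.mp hd).1⟩ : ↥U)
        ≠ connectedComponent (⟨(e:ℝ), hdmemU e he⟩ : ↥U) := by
    intro d hd e he hlt hcomp
    obtain ⟨y, hy1, hy2, hy3⟩ := hgap d hd e he hlt
    set C : Set ℝ := Subtype.val ''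
      (connectedComponent (⟨(d:ℝ), hdmemU d (Finset.mem_filter.mp hd).1⟩ : ↥U)) with hC
    have hCpre : IsPreconnected C :=
      isPreconnected_connectedComponent.image _ continuous_subtype_val.continuousOn
    have hdC : (d:ℝ) ∈ C := ⟨_, mem_connectedComponent, rfl⟩
    have heC : (e:ℝ) ∈ C := by
      refine ⟨⟨(e:ℝ), hdmemU e he⟩, ?_, rfl⟩
      rw [hcomp]
      exact mem_connectedComponent
    have hsub : Set.Icc (d:ℝ) (e:ℝ) ⊆ C := hCpre.Icc_subset hdC heC
    have hyC : y ∈ C := hsub ⟨le_of_lt hy1, le_of_lt hy2⟩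
    obtain ⟨z, _, hz2⟩ := hyC
    exact hy3 (hz2 ▸ z.2)
  -- the bijection
  have hbij : Function.Bijective (fun d : ↥(maxDivs l n) =>
      ConnectedComponents.mk (⟨((d:ℕ):ℝ),
        hdmemU d (Finset.mem_filter.mp d.2).1⟩ : ↥U)) := by
    constructor
    · intro a b hab
      rw [ConnectedComponents.coe_eq_coe] at hab
      ext
      by_contra hne
      rcases lt_or_gt_of_ne hne with h | h
      · exact hcore a a.2 b (Finset.mem_filter.mp b.2).1 (by exact_mod_cast h) hab
      · exact hcore b b.2 a (Finset.mem_filter.mp a.2).1 (by exact_mod_cast h) hab.symm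
    · intro c
      obtain ⟨x, rfl⟩ := ConnectedComponents.surjective_coe c
      set Dc : Finset ℕ := n.divisors.filter
        (fun e : ℕ => ((e:ℝ)) ∈ Subtype.val '' connectedComponent x) with hDc
      have hDcne : Dc.Nonempty := by
        obtain ⟨e, he, hx'⟩ := hmemU_iff _ x.2
        have h1 : x ∈ connectedComponent (⟨(e:ℝ), hdmemU e he⟩ : ↥U) := hkey e he x hx'
        have h2 : connectedComponent x = connectedComponent (⟨(e:ℝ), hdmemU e he⟩ : ↥U) := by
          rw [connectedComponent_eq h1]
        refine ⟨e, Finset.mem_filter.mpr ⟨he, ?_⟩⟩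
        exact ⟨⟨(e:ℝ), hdmemU e he⟩, by rw [h2]; exact mem_connectedComponent, rfl⟩
      set d := Dc.max' hDcne with hd
      have hdDc := Dc.max'_mem hDcne
      have hddiv : d ∈ n.divisors := (Finset.mem_filter.mp hdDc).1
      obtain ⟨zd, hzd1, hzd2⟩ := (Finset.mem_filter.mp hdDc).2
      have hzd : zd = (⟨(d:ℝ), hdmemU d hddiv⟩ : ↥U) := Subtype.ext hzd2
      have hcompd : connectedComponent x
          = connectedComponent (⟨(d:ℝ), hdmemU d hddiv⟩ : ↥U) := by
        rw [← hzd]; exact connectedComponent_eq hzd1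
      have hdmax : d ∈ maxDivs l n := by
        refine Finset.mem_filter.mpr ⟨hddiv, fun e he hlt => ?_⟩
        by_contra hc
        push_neg at hc
        have hIcc : ((e:ℝ)) ∈ Set.Icc (d:ℝ) (l*d) := ⟨le_of_lt hlt, hc⟩
        have h1 : (⟨(e:ℝ), hdmemU e he⟩ : ↥U)
            ∈ connectedComponent (⟨(d:ℝ), hdmemU d hddiv⟩ : ↥U) :=
          hkey d hddiv _ hIcc
        have h2 : e ∈ Dc := by
          refine Finset.mem_filter.mpr ⟨he, ?_⟩
          refine ⟨⟨(e:ℝ), hdmemU e he⟩, ?_, rfl⟩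
          rw [hcompd]
          exact h1
        have h3 : e ≤ d := Dc.le_max' e h2
        have h4 : (e:ℝ) ≤ (d:ℝ) := by exact_mod_cast h3
        exact absurd hlt (not_lt_of_ge h4)
      refine ⟨⟨d, hdmax⟩, ?_⟩
      rw [ConnectedComponents.coe_eq_coe]
      exact hcompd.symm
  have := Nat.card_eq_of_bijective _ hbij
  rw [← this, Nat.card_eq_fintype_card, Fintype.card_coe]

/-- The number of irreducible Dyck factors of `⟨⟨n⟩⟩_λ` equals the number of
connected components of `⋃_{d ∣ n} [d, λd]`. -/
theorem Omega_krWord_eq_blocksCount (l : ℝ) (hl : 1 < l) (n : ℕ) (hn : 1 ≤ n) :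
    Omega (krWord l n) = blocksCount l n := by
  rw [Omega_eq_maxDivs l hl n, blocksCount_eq_maxDivs l hl n hn]
end

section
/- Let w be a nonempty symmetric Dyck word. Then w has at least one centered tunnel (ct(w) > 0) if and only if Ω(w) is odd. Equivalently, the set of nonempty symmetric Dyck words w with ct(w) > 0 equals the set of symmetric Dyck words w with Ω(w) odd. -/
open scoped Classical symmDiff

namespace CtOmegaAux

/-- Height of the length-`i` prefix: `#true - #false`, as an integer. -/
def hgt (w : List Bool) (i : ℕ) : ℤ :=
  ((w.take i).count true : ℤ) - ((w.take i).count false : ℤ)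

lemma count_tf (l : List Bool) : l.count true + l.count false = l.length := by
  induction l with
  | nil => simp
  | cons a t ih => cases a <;> simp [List.count_cons] <;> omega

lemma count_take_split (w : List Bool) (b : Bool) (i t : ℕ) :
    (w.take (i + t)).count b = (w.take i).count b + ((w.drop i).take t).count b := by
  rw [List.take_add, List.count_append]

end CtOmegaAux

set_option maxHeartbeats 2000000 in
/-- A nonempty symmetric Dyck word has a centered tunnel iff its number of
irreducible factors is odd. -/
theorem ct_pos_iff_Omega_odd (w : List Bool) (hne : w ≠ [])
    (hdyck : IsDyck w) (hsym : w.reverse = w.map (fun x => !x)) :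
    0 < ct w ↔ Odd (Omega w) := by
  classical
  open CtOmegaAux in
  obtain ⟨h1, h2⟩ := hdyck
  have hlen : w.count true + w.count false = w.length := count_tf w
  set m := w.length / 2 with hm
  have hml : w.length = 2 * m := by omega
  have hm1 : 1 ≤ m := by
    have : w.length ≠ 0 := fun h => hne (List.eq_nil_of_length_eq_zero h)
    omega
  -- heights are nonnegative
  have hnn : ∀ t, 0 ≤ hgt w t := by
    intro t
    have := h1 (w.take t) (List.take_prefix t w)
    unfold hgt; omega
  -- step relation
  have hstep : ∀ i, (hi : i < w.length) →
      hgt w (i+1) = hgt w i + (if w[i] = true then 1 else -1) := by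
    intro i hi
    have ht : w.take (i+1) = w.take i ++ [w[i]] := by
      rw [List.take_succ, List.getElem?_eq_getElem hi]; rfl
    unfold hgt
    rw [ht, List.count_append, List.count_append]
    cases hwi : w[i] <;> simp [hwi] <;> push_cast <;> ring
  -- symmetry of heights
  have hsymc : ∀ i, i ≤ w.length → hgt w (w.length - i) = hgt w i := by
    intro i hi
    have hrev : ∀ b, (w.reverse.take i).count b = (w.drop (w.length - i)).count b := by
      intro b
      have hr : (w.reverse.take i).reverse = w.drop (w.length - i) := by
        rw [List.reverse_take]; simp
      calc (w.reverse.take i).count b = (w.reverse.take i).reverse.count b :=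
            List.count_reverse.symm
        _ = _ := by rw [hr]
    have hmap : ∀ b, (w.reverse.take i).count b = ((w.take i).map (fun x => !x)).count b := by
      intro b; rw [hsym, List.map_take]
    have hinj : Function.Injective (fun x : Bool => !x) := by
      intro a b h; simpa using congrArg (fun x => !x) h
    have hmapc : ((w.take i).map (fun x => !x)).count true = (w.take i).count false := by
      have := List.count_map_of_injective (w.take i) (fun x => !x) hinj false
      simpa using this
    have hmapc' : ((w.take i).map (fun x => !x)).count false = (w.take i).count true := by
      have := List.count_map_of_injective (w.take i) (fun x => !x) hinj true
      simpa using this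
    have hdropT : (w.take (w.length - i)).count true + (w.drop (w.length - i)).count true
        = w.count true := by
      conv_rhs => rw [← List.take_append_drop (w.length - i) w]
      rw [List.count_append]
    have hdropF : (w.take (w.length - i)).count false + (w.drop (w.length - i)).count false
        = w.count false := by
      conv_rhs => rw [← List.take_append_drop (w.length - i) w]
      rw [List.count_append]
    have e1 : (w.take i).count false = (w.drop (w.length - i)).count true := by
      rw [← hmapc, ← hmap, hrev]
    have e2 : (w.take i).count true = (w.drop (w.length - i)).count false := by
      rw [← hmapc', ← hmap, hrev]
    unfold hgt
    omega
  -- prefix Dyck ↔ height zero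
  have hdytake : ∀ j, IsDyck (w.take j) ↔ hgt w j = 0 := by
    intro j
    constructor
    · rintro ⟨_, hq⟩; unfold hgt; omega
    · intro hz
      refine ⟨fun p hp => h1 p (hp.trans (List.take_prefix j w)), ?_⟩
      unfold hgt at hz; omega
  -- pointwise symmetry
  have hpoint : ∀ i, (hi : i < w.length) → w[w.length - 1 - i]'(by omega) = !(w[i]) := by
    intro i hi
    have e : w.reverse[i]? = (w.map (fun x => !x))[i]? := by rw [hsym]
    rw [List.getElem?_reverse (by simpa using hi), List.getElem?_map,
      List.getElem?_eq_getElem (by omega : w.length - 1 - i < w.length),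
      List.getElem?_eq_getElem hi] at e
    simpa using e
  -- characterization of the middle factor being Dyck
  have hmid : ∀ i, i < m → (IsDyck ((w.drop (i+1)).take (w.length - 2*(i+1))) ↔
      ∀ t, t ≤ w.length - 2*(i+1) → hgt w (i+1) ≤ hgt w (i+1+t)) := by
    intro i him
    set L := w.length - 2*(i+1) with hL
    set M := (w.drop (i+1)).take L with hM
    have hML : M.length = L := by
      rw [hM, List.length_take, List.length_drop]; omega
    have hseg : ∀ t, t ≤ L → ∀ b,
        (w.take (i+1+t)).count b = (w.take (i+1)).count b + (M.take t).count b := by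
      intro t ht b
      rw [hM, List.take_take, min_eq_left ht, count_take_split]
    have htot : hgt w (i+1+L) = hgt w (i+1) := by
      have hiL : i+1+L = w.length - (i+1) := by omega
      rw [hiL]; exact hsymc (i+1) (by omega)
    constructor
    · rintro ⟨hp, _⟩ t ht
      have hc := hp (M.take t) (List.take_prefix t M)
      have e1 := hseg t ht true
      have e2 := hseg t ht false
      unfold hgt
      omega
    · intro hge
      constructor
      · intro p hp
        have hpl : p.length ≤ L := by rw [← hML]; exact hp.length_le
        have hpt : p = M.take p.length := List.prefix_iff_eq_take.mp hp
        have hg := hge p.length hpl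
        have e1 := hseg p.length hpl true
        have e2 := hseg p.length hpl false
        rw [hpt]
        unfold hgt at hg
        omega
      · have e1 := hseg L le_rfl true
        have e2 := hseg L le_rfl false
        have hMM : M.take L = M := by rw [← hML]; exact List.take_length
        rw [← hMM]
        unfold hgt at htot
        omega
  -- Part A : 0 < ct w ↔ hgt w m ≠ 0
  have hA : 0 < ct w ↔ hgt w m ≠ 0 := by
    constructor
    · intro hct
      rw [ct] at hct
      obtain ⟨i, hi⟩ := Finset.card_pos.mp hct
      rw [Finset.mem_filter, Finset.mem_range] at hi
      obtain ⟨him, ha, _, hmidD⟩ := hi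
      have him' : i < m := by omega
      have hwa : w[i]'(by omega) = true := by
        rw [List.getD_eq_getElem w false (by omega : i < w.length)] at ha; exact ha
      have hper := (hmid i him').mp hmidD (m - (i+1)) (by omega)
      have hieq : i + 1 + (m - (i+1)) = m := by omega
      rw [hieq] at hper
      have hstepi := hstep i (by omega)
      rw [hwa] at hstepi
      simp at hstepi
      have hni := hnn i
      intro h0; rw [h0] at hper; omega
    · intro h0
      obtain ⟨i, him, hiz, hmax0⟩ :
          ∃ i, i < m ∧ hgt w i = 0 ∧ ∀ j, i < j → j < m → hgt w j ≠ 0 := by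
        refine ⟨Nat.findGreatest (fun j => hgt w j = 0) (m-1), ?_, ?_, ?_⟩
        · exact Nat.lt_of_le_of_lt (Nat.findGreatest_le _) (by omega)
        · have h00 : hgt w 0 = 0 := by unfold hgt; simp
          exact Nat.findGreatest_spec (P := fun j => hgt w j = 0) (Nat.zero_le _) h00
        · intro j hij hjm
          exact Nat.findGreatest_is_greatest hij (by omega)
      have hmaxS : ∀ j, i < j → j ≤ m → hgt w j ≠ 0 := by
        intro j hij hjm hz
        rcases lt_or_eq_of_le hjm with hjm' | rfl
        · exact hmax0 j hij hjm' hz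
        · exact h0 hz
      have hpos : ∀ j, i < j → j ≤ m → 1 ≤ hgt w j := by
        intro j hij hjm
        have := hmaxS j hij hjm
        have := hnn j
        omega
      have hstepi := hstep i (by omega)
      have hwa : w[i]'(by omega) = true := by
        cases hwi : w[i]'(by omega) with
        | false =>
          rw [hwi] at hstepi
          simp at hstepi
          have := hpos (i+1) (by omega) (by omega)
          omega
        | true => rfl
      have hg1 : hgt w (i+1) = hgt w i + 1 := by
        rw [hwa] at hstepi; simpa using hstepi
      -- all heights in the middle are ≥ 1 = hgt (i+1)
      have hmidpos : ∀ t, t ≤ w.length - 2*(i+1) → hgt w (i+1) ≤ hgt w (i+1+t) := by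
        intro t ht
        rw [hg1, hiz]
        set j := i + 1 + t with hj
        rcases le_or_gt j m with hjm | hjm
        · exact hpos j (by omega) hjm
        · have hje : hgt w j = hgt w (2*m - j) := by
            have := hsymc (2*m - j) (by omega)
            rw [hml] at this
            have hjj : 2*m - (2*m - j) = j := by omega
            rw [hjj] at this
            exact this
          rw [hje]
          exact hpos (2*m - j) (by omega) (by omega)
      rw [ct]
      rw [Finset.card_pos]
      refine ⟨i, ?_⟩
      rw [Finset.mem_filter, Finset.mem_range]
      refine ⟨by omega, ?_, ?_, ?_⟩
      · rw [List.getD_eq_getElem w false (by omega : i < w.length)]; exact hwa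
      · rw [List.getD_eq_getElem w true (by omega : w.length - 1 - i < w.length)]
        rw [hpoint i (by omega), hwa]
        rfl
      · exact (hmid i him).mpr hmidpos
  -- Part B : Odd (Omega w) ↔ hgt w m ≠ 0
  have hB : Odd (Omega w) ↔ hgt w m ≠ 0 := by
    rw [Omega]
    set T := (Finset.range w.length).filter (fun i => IsDyck (w.take (i+1))) with hT
    have hmemT : ∀ a, a ∈ T ↔ a < w.length ∧ hgt w (a+1) = 0 := by
      intro a
      rw [hT, Finset.mem_filter, Finset.mem_range, hdytake]
    have hlast : w.length - 1 ∈ T := by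
      rw [hmemT]
      refine ⟨by omega, ?_⟩
      have : w.length - 1 + 1 = w.length := by omega
      rw [this]
      unfold hgt
      rw [List.take_length]
      omega
    set T' := T.erase (w.length - 1) with hT'
    have hcard1 : T'.card + 1 = T.card := Finset.card_erase_add_one hlast
    have hmemT' : ∀ a, a ∈ T' ↔ a ≤ 2*m - 2 ∧ hgt w (a+1) = 0 := by
      intro a
      rw [hT', Finset.mem_erase, hmemT]
      omega
    -- the involution a ↦ 2m - 2 - a
    have hinvT' : ∀ a, a ∈ T' → 2*m - 2 - a ∈ T' := by
      intro a ha
      rw [hmemT'] at ha ⊢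
      obtain ⟨ha1, ha2⟩ := ha
      refine ⟨by omega, ?_⟩
      have := hsymc (a+1) (by omega)
      rw [hml] at this
      have he : 2*m - (a+1) = 2*m - 2 - a + 1 := by omega
      rw [he] at this
      omega
    have heven : ∀ s : Finset ℕ, (∀ a, a ∈ s → 2*m - 2 - a ∈ s) →
        (∀ a, a ∈ s → a ≤ 2*m - 2) → (∀ a, a ∈ s → 2*m - 2 - a ≠ a) → Even s.card := by
      intro s hmaps hbd hnfix
      have hsum : ∑ _x ∈ s, (1 : ZMod 2) = 0 := by
        refine Finset.sum_involution (fun a _ => 2*m - 2 - a) (fun a ha => by decide)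
          (fun a ha _ => hnfix a ha) (fun a ha => hmaps a ha) ?_
        intro a ha
        have := hbd a ha
        show 2*m - 2 - (2*m - 2 - a) = a
        omega
      have : ((s.card : ℕ) : ZMod 2) = 0 := by
        rw [← hsum]; simp
      have h2d := (ZMod.natCast_eq_zero_iff s.card 2).mp this
      exact even_iff_two_dvd.mpr h2d
    by_cases hc : hgt w m = 0
    · -- m - 1 ∈ T', remove it too; Omega is even
      have hmT' : m - 1 ∈ T' := by
        rw [hmemT']
        have : m - 1 + 1 = m := by omega
        rw [this]
        exact ⟨by omega, hc⟩
      set T'' := T'.erase (m - 1) with hT''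
      have hcard2 : T''.card + 1 = T'.card := Finset.card_erase_add_one hmT'
      have hmemT'' : ∀ a, a ∈ T'' ↔ a ≠ m - 1 ∧ a ≤ 2*m - 2 ∧ hgt w (a+1) = 0 := by
        intro a
        rw [hT'', Finset.mem_erase, hmemT']
      have hev : Even T''.card := by
        refine heven T'' ?_ ?_ ?_
        · intro a ha
          rw [hmemT''] at ha ⊢
          obtain ⟨hne1, ha1, ha2⟩ := ha
          have hin := hinvT' a ((hmemT' a).mpr ⟨ha1, ha2⟩)
          rw [hmemT'] at hin
          exact ⟨by omega, hin.1, hin.2⟩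
        · intro a ha; rw [hmemT''] at ha; omega
        · intro a ha; rw [hmemT''] at ha; omega
      simp only [Nat.odd_iff, Nat.even_iff] at *
      constructor
      · intro hodd; omega
      · intro hne'; exact absurd hc hne'
    · -- m - 1 ∉ T'; T' itself has a fixed-point-free involution; Omega is odd
      have hev : Even T'.card := by
        refine heven T' hinvT' ?_ ?_
        · intro a ha; rw [hmemT'] at ha; omega
        · intro a ha hfix
          rw [hmemT'] at ha
          have : a = m - 1 := by omega
          subst this
          have : m - 1 + 1 = m := by omega
          rw [this] at ha
          exact hc ha.2
      constructor
      · intro _; exact hc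
      · intro _
        rw [← hcard1]
        rw [Nat.even_iff] at hev
        rw [Nat.odd_iff]
        omega
  rw [hA, hB]
end
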